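/- arXiv:1606.00187 — 9 statements merged into one kernel-verified Lean document; each statement's English description precedes it below -/
import Mathlib

section
/- Suppose that for every unit vector u in H one has |⟨Σu,u⟩ − ⟨Σ̂u,u⟩| ≤ B(⟨Σu,u⟩) and |⟨Σu,u⟩ − ⟨Σ̂u,u⟩| ≤ B(⟨Σ̂u,u⟩). Then for every index i ≥ 1 the eigenvalues satisfy |λ_i − λ̂_i| ≤ B(λ_i) and |λ_i − λ̂_i| ≤ B(λ̂_i). -/
open scoped RealInnerProductSpace

/-!
Courant–Fischer in one step: a dimension count gives a unit vector `u` in the span of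
`p 0, …, p i` that is orthogonal to `q 0, …, q (i-1)`. Since both eigenvalue sequences are
nonincreasing, `λ i ≤ ⟪Σ u, u⟫` and `0 ≤ ⟪Σ̂ u, u⟫ ≤ λ̂ i`, so the hypothesis at `u` and the
monotonicity of `B` give `λ i - λ̂ i ≤ B (λ̂ i)`. Exchanging the roles of `Σ` and `Σ̂` gives the
other inequality, and monotonicity of `B` once more turns the two one-sided bounds into both
bounds on `|λ i - λ̂ i|`.
-/

section WeightedAverage

variable {ι : Type*} {w c : ι → ℝ} {a s : ℝ}

theorem le_of_hasSum_weighted (hw : HasSum w 1) (hw0 : ∀ k, 0 ≤ w k)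
    (hs : HasSum (fun k => c k * w k) s) (hc : ∀ k, w k ≠ 0 → a ≤ c k) : a ≤ s := by
  refine (mul_one a).symm.trans_le (hasSum_le (fun k => ?_) (hw.mul_left a) hs)
  rcases eq_or_ne (w k) 0 with h | h
  · simp [h]
  · exact mul_le_mul_of_nonneg_right (hc k h) (hw0 k)

theorem ge_of_hasSum_weighted (hw : HasSum w 1) (hw0 : ∀ k, 0 ≤ w k)
    (hs : HasSum (fun k => c k * w k) s) (hc : ∀ k, w k ≠ 0 → c k ≤ a) : s ≤ a := by
  refine (hasSum_le (fun k => ?_) hs (hw.mul_left a)).trans_eq (mul_one a)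
  rcases eq_or_ne (w k) 0 with h | h
  · simp [h]
  · exact mul_le_mul_of_nonneg_right (hc k h) (hw0 k)

end WeightedAverage

namespace HilbertBasis

variable {ι E : Type*} [NormedAddCommGroup E] [InnerProductSpace ℝ E]
  (b : HilbertBasis ι ℝ E)

theorem hasSum_inner_sq (u : E) : HasSum (fun i => ⟪u, b i⟫ ^ 2) (‖u‖ ^ 2) := by
  simpa [sq, real_inner_comm, real_inner_self_eq_norm_sq] using b.hasSum_inner_mul_inner u u

theorem summable_mul_inner_smul [CompleteSpace E] {c : ι → ℝ} {C : ℝ} (hc : ∀ i, |c i| ≤ C)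
    (u : E) :
    Summable fun i => (c i * ⟪u, b i⟫) • b i := by
  have hsq : Summable fun i => ‖c i * ⟪u, b i⟫‖ ^ 2 := by
    refine .of_nonneg_of_le (fun _ => sq_nonneg _) (fun i => ?_)
      ((b.hasSum_inner_sq u).summable.mul_left (C ^ 2))
    rw [norm_mul, mul_pow, Real.norm_eq_abs, Real.norm_eq_abs, sq_abs ⟪u, b i⟫]
    gcongr
    exact hc i
  simpa using (b.orthonormal.orthogonalFamily.summable_iff_norm_sq_summable _).2 hsq

theorem hasSum_mul_inner_sq [CompleteSpace E] {c : ι → ℝ} {C : ℝ} (hc : ∀ i, |c i| ≤ C)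
    (u : E) :
    HasSum (fun i => c i * ⟪u, b i⟫ ^ 2) ⟪∑' i, (c i * ⟪u, b i⟫) • b i, u⟫ := by
  have h := ((innerSL ℝ).flip u).hasSum (b.summable_mul_inner_smul hc u).hasSum
  simp only [ContinuousLinearMap.flip_apply, innerSL_apply_apply] at h
  simpa only [real_inner_smul_right, real_inner_comm u, sq, mul_assoc] using h

end HilbertBasis

section

variable {E : Type*} [NormedAddCommGroup E] [InnerProductSpace ℝ E]

theorem Submodule.exists_norm_eq_one_forall_inner_eq_zero (V : Submodule ℝ E)
    [FiniteDimensional ℝ V] {n : ℕ} (hn : n < Module.finrank ℝ V) (q : Fin n → E) :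
    ∃ u ∈ V, ‖u‖ = 1 ∧ ∀ j, ⟪u, q j⟫ = 0 := by
  let φ : V →ₗ[ℝ] (Fin n → ℝ) :=
    LinearMap.pi fun j => (innerSL ℝ (q j)).toLinearMap ∘ₗ V.subtype
  obtain ⟨x, hx, hx0⟩ :=
    (Submodule.ne_bot_iff _).1 (LinearMap.ker_ne_bot_of_finrank_lt (f := φ) (by simpa using hn))
  have hx0' : (x : E) ≠ 0 := by simpa using hx0
  refine ⟨‖(x : E)‖⁻¹ • (x : E), V.smul_mem _ x.2, norm_smul_inv_norm hx0', fun j => ?_⟩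
  have hxj : ⟪q j, (x : E)⟫ = 0 := by simpa [φ] using congrFun (LinearMap.mem_ker.1 hx) j
  rw [real_inner_smul_left, real_inner_comm, hxj, mul_zero]

theorem Orthonormal.exists_norm_eq_one_inner_eq_zero {p : ℕ → E} (hp : Orthonormal ℝ p)
    (q : ℕ → E) (i : ℕ) :
    ∃ u : E, ‖u‖ = 1 ∧ (∀ k, i < k → ⟪u, p k⟫ = 0) ∧ ∀ k < i, ⟪u, q k⟫ = 0 := by
  set V := Submodule.span ℝ (Set.range (p ∘ (Fin.val : Fin (i + 1) → ℕ)))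
  have hV : Module.finrank ℝ V = i + 1 := by
    rw [finrank_span_eq_card (hp.comp _ Fin.val_injective).linearIndependent]
    simp
  have : FiniteDimensional ℝ V := FiniteDimensional.span_of_finite ℝ (Set.finite_range _)
  obtain ⟨u, huV, hu1, huq⟩ :=
    V.exists_norm_eq_one_forall_inner_eq_zero (by omega) fun j : Fin i => q j
  refine ⟨u, hu1, fun k hk => ?_, fun k hk => huq ⟨k, hk⟩⟩
  have hVk : V ≤ (ℝ ∙ p k)ᗮ := by
    rw [Submodule.span_le]
    rintro _ ⟨j, rfl⟩
    exact Submodule.mem_orthogonal_singleton_iff_inner_right.2 (hp.2 (by omega))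
  exact Submodule.mem_orthogonal_singleton_iff_inner_left.1 (hVk huV)

theorem sub_le_of_quadratic_form_bound (p q : HilbertBasis ℕ ℝ E)
    {lam lamh : ℕ → ℝ} (hlam : Antitone lam) (hlamh : Antitone lamh)
    (hlamh_nonneg : ∀ i, 0 ≤ lamh i) {Q Qh : E → ℝ}
    (hQ : ∀ u, HasSum (fun k => lam k * ⟪u, p k⟫ ^ 2) (Q u))
    (hQh : ∀ u, HasSum (fun k => lamh k * ⟪u, q k⟫ ^ 2) (Qh u))
    {B : ℝ → ℝ} (hB : MonotoneOn B (Set.Ici 0))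
    (hbound : ∀ u, ‖u‖ = 1 → |Q u - Qh u| ≤ B (Qh u)) (i : ℕ) :
    lam i - lamh i ≤ B (lamh i) := by
  obtain ⟨u, hu1, hup, huq⟩ := p.orthonormal.exists_norm_eq_one_inner_eq_zero q i
  have hp1 : HasSum (fun k => ⟪u, p k⟫ ^ 2) 1 := by simpa [hu1] using p.hasSum_inner_sq u
  have hq1 : HasSum (fun k => ⟪u, q k⟫ ^ 2) 1 := by simpa [hu1] using q.hasSum_inner_sq u
  have hlow : lam i ≤ Q u := by
    refine le_of_hasSum_weighted hp1 (fun _ => sq_nonneg _) (hQ u) fun k hk => hlam ?_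
    by_contra! hik
    simp [hup k hik] at hk
  have hhigh : Qh u ≤ lamh i := by
    refine ge_of_hasSum_weighted hq1 (fun _ => sq_nonneg _) (hQh u) fun k hk => hlamh ?_
    by_contra! hki
    simp [huq k hki] at hk
  have hQh_nonneg : 0 ≤ Qh u := (hQh u).nonneg fun k => mul_nonneg (hlamh_nonneg k) (sq_nonneg _)
  calc lam i - lamh i ≤ |Q u - Qh u| := by linarith [le_abs_self (Q u - Qh u)]
    _ ≤ B (Qh u) := hbound u hu1
    _ ≤ B (lamh i) := hB hQh_nonneg (hQh_nonneg.trans hhigh) hhigh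

end

theorem abs_sub_le_of_sub_le_of_sub_le {B : ℝ → ℝ} (hB : MonotoneOn B (Set.Ici 0)) {a b : ℝ}
    (ha : 0 ≤ a) (hb : 0 ≤ b) (hab : a - b ≤ B b) (hba : b - a ≤ B a) :
    |a - b| ≤ B a ∧ |a - b| ≤ B b := by
  rcases le_total b a with h | h
  · rw [abs_of_nonneg (sub_nonneg.2 h)]
    exact ⟨hab.trans (hB hb ha h), hab⟩
  · rw [abs_sub_comm, abs_of_nonneg (sub_nonneg.2 h)]
    exact ⟨hba, hba.trans (hB ha hb h)⟩

theorem robust_pca_eigenvalue_bound_general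
    {H : Type*} [NormedAddCommGroup H] [InnerProductSpace ℝ H] [CompleteSpace H]
    (p q : HilbertBasis ℕ ℝ H)
    (lam lamh : ℕ → ℝ)
    (hlam_anti : Antitone lam) (hlam_nonneg : ∀ i, 0 ≤ lam i)
    (hlamh_anti : Antitone lamh) (hlamh_nonneg : ∀ i, 0 ≤ lamh i)
    (S Sh : H →L[ℝ] H)
    (hS : ∀ u, S u = ∑' i, (lam i * ⟪u, p i⟫) • p i)
    (hSh : ∀ u, Sh u = ∑' i, (lamh i * ⟪u, q i⟫) • q i)
    (B : ℝ → ℝ)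
    (hB_mono : ∀ s t, 0 ≤ s → s ≤ t → B s ≤ B t)
    (hbound : ∀ u : H, ‖u‖ = 1 →
      |⟪S u, u⟫ - ⟪Sh u, u⟫| ≤ B ⟪S u, u⟫ ∧
      |⟪S u, u⟫ - ⟪Sh u, u⟫| ≤ B ⟪Sh u, u⟫) :
    ∀ i : ℕ, |lam i - lamh i| ≤ B (lam i) ∧ |lam i - lamh i| ≤ B (lamh i) := by
  have hB : MonotoneOn B (Set.Ici 0) := fun s hs t _ hst => hB_mono s t hs hst
  have hQ (u : H) : HasSum (fun k => lam k * ⟪u, p k⟫ ^ 2) ⟪S u, u⟫ :=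
    hS u ▸ p.hasSum_mul_inner_sq (fun k => (abs_of_nonneg (hlam_nonneg k)).trans_le
      (hlam_anti k.zero_le)) u
  have hQh (u : H) : HasSum (fun k => lamh k * ⟪u, q k⟫ ^ 2) ⟪Sh u, u⟫ :=
    hSh u ▸ q.hasSum_mul_inner_sq (fun k => (abs_of_nonneg (hlamh_nonneg k)).trans_le
      (hlamh_anti k.zero_le)) u
  intro i
  exact abs_sub_le_of_sub_le_of_sub_le hB (hlam_nonneg i) (hlamh_nonneg i)
    (sub_le_of_quadratic_form_bound p q hlam_anti hlamh_anti hlamh_nonneg hQ hQh hB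
      (fun u hu => (hbound u hu).2) i)
    (sub_le_of_quadratic_form_bound q p hlamh_anti hlam_anti hlam_nonneg hQh hQ hB
      (fun u hu => abs_sub_comm (⟪S u, u⟫) _ ▸ (hbound u hu).1) i)

/-- If the quadratic forms of `Σ` and `Σ̂` are uniformly close on the unit sphere,
with accuracy `B` evaluated either at `⟪Σu,u⟫` or at `⟪Σ̂u,u⟫`, then the (nonincreasing)
eigenvalues satisfy `|λ_i - λ̂_i| ≤ B(λ_i)` and `|λ_i - λ̂_i| ≤ B(λ̂_i)`. -/
theorem robust_pca_eigenvalue_bound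
    {H : Type*} [NormedAddCommGroup H] [InnerProductSpace ℝ H] [CompleteSpace H]
    (p q : HilbertBasis ℕ ℝ H)
    (lam lamh : ℕ → ℝ)
    (hlam_anti : Antitone lam) (hlam_nonneg : ∀ i, 0 ≤ lam i)
    (hlam_sum : Summable lam)
    (hlamh_anti : Antitone lamh) (hlamh_nonneg : ∀ i, 0 ≤ lamh i)
    (hlamh_sum : Summable lamh)
    (S Sh : H →L[ℝ] H)
    (hS : ∀ u, S u = ∑' i, (lam i * ⟪u, p i⟫) • p i)
    (hSh : ∀ u, Sh u = ∑' i, (lamh i * ⟪u, q i⟫) • q i)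
    (B : ℝ → ℝ)
    (hB_nonneg : ∀ t, 0 ≤ t → 0 ≤ B t)
    (hB_mono : ∀ s t, 0 ≤ s → s ≤ t → B s ≤ B t)
    (hB_half : ∀ t a, 0 ≤ t → 0 ≤ a → B (t + a) ≤ B t + a / 2)
    (hbound : ∀ u : H, ‖u‖ = 1 →
      |⟪S u, u⟫ - ⟪Sh u, u⟫| ≤ B ⟪S u, u⟫ ∧
      |⟪S u, u⟫ - ⟪Sh u, u⟫| ≤ B ⟪Sh u, u⟫) :
    ∀ i : ℕ, |lam i - lamh i| ≤ B (lam i) ∧ |lam i - lamh i| ≤ B (lamh i) :=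
  robust_pca_eigenvalue_bound_general p q lam lamh hlam_anti hlam_nonneg hlamh_anti hlamh_nonneg S
    Sh hS hSh B hB_mono hbound
end

section
/- Assume ‖Σ − Σ̂‖_∞ ≤ ε and |λ_i − λ̂_i| ≤ ε for all i ≥ 1, with ε > 0. Then for every 1/L-Lipschitz function f : ℝ → ℝ, ‖f(Σ) − f(Σ̂)‖_∞ ≤ 2 L^{-1} √( √2 · Tr(Σ) · ε + ε² ). -/
open scoped RealInnerProductSpace
open scoped ENNReal

section helpers
variable {H : Type*} [NormedAddCommGroup H] [InnerProductSpace ℝ H] [CompleteSpace H]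

lemma rb_memlp (x : ℕ → ℝ) (hx : Summable fun j => x j ^ 2) : Memℓp x 2 := by
  apply memℓp_gen
  have : (2 : ℝ≥0∞).toReal = (2:ℝ) := by simp
  rw [this]
  simpa [Real.rpow_two, Real.norm_eq_abs, sq_abs] using hx

lemma rb_hasSum (q : HilbertBasis ℕ ℝ H) (x : ℕ → ℝ) (hx : Summable fun j => x j ^ 2) :
    HasSum (fun j => x j • (q j : H)) (∑' j, x j • (q j : H)) := by
  have h := q.hasSum_repr_symm ⟨x, rb_memlp x hx⟩
  have h2 : (fun j => (⟨x, rb_memlp x hx⟩ : lp (fun _ : ℕ => ℝ) 2) j • (q j : H))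
      = fun j => x j • (q j : H) := rfl
  rw [h2] at h
  exact h.tsum_eq ▸ h

lemma rb_norm_sq (q : HilbertBasis ℕ ℝ H) (x : ℕ → ℝ) (hx : Summable fun j => x j ^ 2) :
    ‖∑' j, x j • (q j : H)‖ ^ 2 = ∑' j, x j ^ 2 := by
  have h := q.hasSum_repr_symm ⟨x, rb_memlp x hx⟩
  have h2 : (fun j => (⟨x, rb_memlp x hx⟩ : lp (fun _ : ℕ => ℝ) 2) j • (q j : H))
      = fun j => x j • (q j : H) := rfl
  rw [h2] at h
  rw [h.tsum_eq]
  rw [LinearIsometryEquiv.norm_map]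
  have hp : (0:ℝ) < (2 : ℝ≥0∞).toReal := by simp
  have := lp.norm_rpow_eq_tsum hp (⟨x, rb_memlp x hx⟩ : lp (fun _ : ℕ => ℝ) 2)
  have ht : (2 : ℝ≥0∞).toReal = (2:ℝ) := by simp
  rw [ht] at this
  simpa [Real.rpow_two, Real.norm_eq_abs, sq_abs] using this

lemma rb_inner_hasSum (q : HilbertBasis ℕ ℝ H) (x : ℕ → ℝ) (hx : Summable fun j => x j ^ 2)
    (v : H) :
    HasSum (fun j => x j * ⟪(q j : H), v⟫) ⟪∑' j, x j • (q j : H), v⟫ := by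
  have h := (rb_hasSum q x hx).mapL (innerSL ℝ v)
  have h2 : (fun j => (innerSL ℝ v) (x j • (q j : H)))
      = fun j => x j * ⟪(q j : H), v⟫ := by
    funext j
    simp only [innerSL_apply_apply, real_inner_smul_right]
    rw [real_inner_comm]
  rw [h2] at h
  have h3 : (innerSL ℝ v) (∑' j, x j • (q j : H)) = ⟪∑' j, x j • (q j : H), v⟫ := by
    simp only [innerSL_apply_apply]; exact real_inner_comm _ _
  rw [h3] at h
  exact h

lemma rb_inner (q : HilbertBasis ℕ ℝ H) (x : ℕ → ℝ) (hx : Summable fun j => x j ^ 2)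
    (v : H) : ⟪∑' j, x j • (q j : H), v⟫ = ∑' j, x j * ⟪(q j : H), v⟫ :=
  (rb_inner_hasSum q x hx v).tsum_eq.symm

lemma rb_coeff (q : HilbertBasis ℕ ℝ H) (x : ℕ → ℝ) (hx : Summable fun j => x j ^ 2)
    (j : ℕ) : ⟪∑' k, x k • (q k : H), q j⟫ = x j := by
  rw [rb_inner q x hx (q j)]
  rw [tsum_eq_single j]
  · have : ⟪(q j : H), q j⟫ = 1 := by
      rw [real_inner_self_eq_norm_sq, q.orthonormal.1 j]; norm_num
    rw [this, mul_one]
  · intro k hk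
    rw [q.orthonormal.2 hk, mul_zero]

lemma rb_parseval (q : HilbertBasis ℕ ℝ H) (x : H) :
    Summable (fun j => ⟪x, q j⟫ ^ 2) ∧ (∑' j, ⟪x, q j⟫ ^ 2) = ‖x‖ ^ 2 := by
  have h := q.hasSum_inner_mul_inner x x
  have h2 : (fun j => ⟪x, q j⟫ * ⟪(q j : H), x⟫) = fun j => ⟪x, q j⟫ ^ 2 := by
    funext j; rw [real_inner_comm (q j : H) x]; ring
  rw [h2] at h
  exact ⟨h.summable, by rw [h.tsum_eq, real_inner_self_eq_norm_sq]⟩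

lemma rb_cs_summable {x y : ℕ → ℝ} (hx : Summable fun i => x i ^ 2)
    (hy : Summable fun i => y i ^ 2) : Summable fun i => |x i * y i| := by
  apply Summable.of_nonneg_of_le (fun i => abs_nonneg _) (fun i => ?_)
    ((hx.add hy).div_const 2)
  rw [abs_mul]
  nlinarith [sq_nonneg (|x i| - |y i|), sq_abs (x i), sq_abs (y i)]

lemma rb_cs_le {x y : ℕ → ℝ} (hx : Summable fun i => x i ^ 2)
    (hy : Summable fun i => y i ^ 2) :
    ∑' i, |x i * y i| ≤ Real.sqrt (∑' i, x i ^ 2) * Real.sqrt (∑' i, y i ^ 2) := by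
  apply Summable.tsum_le_of_sum_le (rb_cs_summable hx hy)
  intro s
  have h1 : ∑ i ∈ s, |x i * y i| = ∑ i ∈ s, |x i| * |y i| := by
    apply Finset.sum_congr rfl; intro i _; exact abs_mul _ _
  have h2 := Finset.sum_mul_sq_le_sq_mul_sq s (fun i => |x i|) (fun i => |y i|)
  have hxs : ∑ i ∈ s, |x i| ^ 2 ≤ ∑' i, x i ^ 2 := by
    calc ∑ i ∈ s, |x i| ^ 2 = ∑ i ∈ s, x i ^ 2 := by
          apply Finset.sum_congr rfl; intro i _; exact sq_abs _
    _ ≤ ∑' i, x i ^ 2 := Summable.sum_le_tsum s (fun i _ => sq_nonneg _) hx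
  have hys : ∑ i ∈ s, |y i| ^ 2 ≤ ∑' i, y i ^ 2 := by
    calc ∑ i ∈ s, |y i| ^ 2 = ∑ i ∈ s, y i ^ 2 := by
          apply Finset.sum_congr rfl; intro i _; exact sq_abs _
    _ ≤ ∑' i, y i ^ 2 := Summable.sum_le_tsum s (fun i _ => sq_nonneg _) hy
  have hnn : (0:ℝ) ≤ ∑ i ∈ s, |x i| * |y i| :=
    Finset.sum_nonneg fun i _ => mul_nonneg (abs_nonneg _) (abs_nonneg _)
  rw [h1]
  have hle : (∑ i ∈ s, |x i| * |y i|) ^ 2 ≤ (∑' i, x i ^ 2) * (∑' i, y i ^ 2) := by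
    calc (∑ i ∈ s, |x i| * |y i|) ^ 2 ≤ (∑ i ∈ s, |x i| ^ 2) * ∑ i ∈ s, |y i| ^ 2 := h2
    _ ≤ (∑' i, x i ^ 2) * (∑' i, y i ^ 2) := by
        exact mul_le_mul hxs hys (Finset.sum_nonneg fun i _ => sq_nonneg _)
          (tsum_nonneg fun i => sq_nonneg _)
  calc ∑ i ∈ s, |x i| * |y i| = Real.sqrt ((∑ i ∈ s, |x i| * |y i|) ^ 2) :=
        (Real.sqrt_sq hnn).symm
  _ ≤ Real.sqrt ((∑' i, x i ^ 2) * (∑' i, y i ^ 2)) := Real.sqrt_le_sqrt hle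
  _ = Real.sqrt (∑' i, x i ^ 2) * Real.sqrt (∑' i, y i ^ 2) :=
        Real.sqrt_mul (tsum_nonneg fun i => sq_nonneg _) _

lemma rb_sq_summable {g a : ℕ → ℝ} {M : ℝ} (ha : Summable fun i => a i ^ 2)
    (hg : ∀ i, |g i| ≤ M) : Summable fun i => (g i * a i) ^ 2 := by
  apply Summable.of_nonneg_of_le (fun i => sq_nonneg _) (fun i => ?_) (ha.mul_left (M ^ 2))
  have h1 := hg i
  have h2 : (g i) ^ 2 ≤ M ^ 2 := by nlinarith [abs_nonneg (g i), sq_abs (g i)]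
  nlinarith [sq_nonneg (a i)]

lemma rb_sqle {a b : ℝ} (hb : 0 ≤ b) (h : a ^ 2 ≤ b ^ 2) (ha : 0 ≤ a) : a ≤ b := by
  nlinarith

end helpers



set_option maxHeartbeats 2000000 in
/-- If `‖Σ - Σ̂‖ ≤ ε` and `|λ_i - λ̂_i| ≤ ε` for all `i`, with `ε > 0`, then for every
`1/L`-Lipschitz function `f`, `‖f(Σ) - f(Σ̂)‖ ≤ 2 L⁻¹ √(√2 Tr(Σ) ε + ε²)`. -/
theorem robust_pca_smooth_cutoff_worst_case_bound
    {H : Type*} [NormedAddCommGroup H] [InnerProductSpace ℝ H] [CompleteSpace H]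
    (p q : HilbertBasis ℕ ℝ H)
    (lam lamh : ℕ → ℝ)
    (hlam_anti : Antitone lam) (hlam_nonneg : ∀ i, 0 ≤ lam i)
    (hlam_sum : Summable lam)
    (hlamh_anti : Antitone lamh) (hlamh_nonneg : ∀ i, 0 ≤ lamh i)
    (hlamh_sum : Summable lamh)
    (S Sh : H →L[ℝ] H)
    (hS : ∀ u, S u = ∑' i, (lam i * ⟪u, p i⟫) • p i)
    (hSh : ∀ u, Sh u = ∑' i, (lamh i * ⟪u, q i⟫) • q i)
    (ε : ℝ) (hε : 0 < ε)
    (hnorm : ‖S - Sh‖ ≤ ε)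
    (heig : ∀ i : ℕ, |lam i - lamh i| ≤ ε)
    (L : ℝ) (hL : 0 < L)
    (f : ℝ → ℝ) (hf : ∀ s t : ℝ, |f s - f t| ≤ L⁻¹ * |s - t|)
    (fS fSh : H →L[ℝ] H)
    (hfS : ∀ u, fS u = ∑' i, (f (lam i) * ⟪u, p i⟫) • p i)
    (hfSh : ∀ u, fSh u = ∑' i, (f (lamh i) * ⟪u, q i⟫) • q i) :
    ‖fS - fSh‖ ≤
      2 * L⁻¹ * Real.sqrt (Real.sqrt 2 * (∑' i : ℕ, lam i) * ε + ε ^ 2) := by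
  have hLinv : (0:ℝ) ≤ L⁻¹ := inv_nonneg.mpr hL.le
  set T : ℝ := ∑' i : ℕ, lam i with hTdef
  have hT0 : 0 ≤ T := tsum_nonneg hlam_nonneg
  have hlam_le : ∀ i, lam i ≤ lam 0 := fun i => hlam_anti (Nat.zero_le i)
  have hlamh_le : ∀ j, lamh j ≤ lamh 0 := fun j => hlamh_anti (Nat.zero_le j)
  -- bounds on f values
  set M : ℝ := |f (lam 0)| + L⁻¹ * lam 0 with hMdef
  have hfM : ∀ i, |f (lam i)| ≤ M := by
    intro i
    have h1 := hf (lam i) (lam 0)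
    have h2 : |lam i - lam 0| ≤ lam 0 := by
      rw [abs_sub_comm, abs_of_nonneg (by linarith [hlam_le i, hlam_nonneg i])]
      linarith [hlam_nonneg i]
    have h3 := abs_sub_abs_le_abs_sub (f (lam i)) (f (lam 0))
    have h4 : L⁻¹ * |lam i - lam 0| ≤ L⁻¹ * lam 0 := mul_le_mul_of_nonneg_left h2 hLinv
    rw [hMdef]; linarith
  set Mh : ℝ := |f (lamh 0)| + L⁻¹ * lamh 0 with hMhdef
  have hfMh : ∀ j, |f (lamh j)| ≤ Mh := by
    intro j
    have h1 := hf (lamh j) (lamh 0)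
    have h2 : |lamh j - lamh 0| ≤ lamh 0 := by
      rw [abs_sub_comm, abs_of_nonneg (by linarith [hlamh_le j, hlamh_nonneg j])]
      linarith [hlamh_nonneg j]
    have h3 := abs_sub_abs_le_abs_sub (f (lamh j)) (f (lamh 0))
    have h4 : L⁻¹ * |lamh j - lamh 0| ≤ L⁻¹ * lamh 0 := mul_le_mul_of_nonneg_left h2 hLinv
    rw [hMhdef]; linarith
  -- overlap coefficients
  set b : ℕ → ℕ → ℝ := fun i j => ⟪(p i : H), q j⟫ with hbdef
  have hrow : ∀ i, Summable (fun j => b i j ^ 2) := fun i => (rb_parseval q (p i)).1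
  have hrow1 : ∀ i, (∑' j, b i j ^ 2) = 1 := by
    intro i
    rw [(rb_parseval q (p i)).2, p.orthonormal.1 i]; norm_num
  have hcol : ∀ j, Summable (fun i => b i j ^ 2) := by
    intro j
    exact ((rb_parseval p (q j)).1).congr fun i => by
      simp only [hbdef]; rw [real_inner_comm]
  have hcol1 : ∀ j, (∑' i, b i j ^ 2) = 1 := by
    intro j
    have h2 := (rb_parseval p (q j)).2
    calc (∑' i, b i j ^ 2) = ∑' i, ⟪q j, p i⟫ ^ 2 :=
          tsum_congr fun i => by simp only [hbdef]; rw [real_inner_comm]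
    _ = 1 := by rw [h2, q.orthonormal.1 j]; norm_num
  -- summability of eigenvalue squares
  have hsq_sum : Summable (fun i => lam i ^ 2) := by
    apply Summable.of_nonneg_of_le (fun i => sq_nonneg _) (fun i => ?_)
      (hlam_sum.mul_left (lam 0))
    nlinarith [hlam_nonneg i, hlam_le i]
  -- per-row weighted sums
  have hmS : ∀ i, Summable (fun j => lam j * b i j ^ 2) := by
    intro i
    apply Summable.of_nonneg_of_le
      (fun j => mul_nonneg (hlam_nonneg j) (sq_nonneg _)) (fun j => ?_)
      ((hrow i).mul_left (lam 0))
    exact mul_le_mul_of_nonneg_right (hlam_le j) (sq_nonneg _)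
  have hnS : ∀ i, Summable (fun j => lam j ^ 2 * b i j ^ 2) := by
    intro i
    apply Summable.of_nonneg_of_le
      (fun j => mul_nonneg (sq_nonneg _) (sq_nonneg _)) (fun j => ?_)
      ((hrow i).mul_left (lam 0 ^ 2))
    apply mul_le_mul_of_nonneg_right _ (sq_nonneg _)
    nlinarith [hlam_nonneg j, hlam_le j]
  have hlamhS : ∀ i, Summable (fun j => lamh j * b i j ^ 2) := by
    intro i
    apply Summable.of_nonneg_of_le
      (fun j => mul_nonneg (hlamh_nonneg j) (sq_nonneg _)) (fun j => ?_)
      ((hrow i).mul_left (lamh 0))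
    exact mul_le_mul_of_nonneg_right (hlamh_le j) (sq_nonneg _)
  -- diagonal matrix elements
  have hSpp : ∀ i, ⟪S (p i), p i⟫ = lam i := by
    intro i
    have h1 : ⟪(p i : H), p i⟫ = 1 := by
      rw [real_inner_self_eq_norm_sq, p.orthonormal.1 i]; norm_num
    rw [hS (p i)]
    have h2 : (∑' k, (lam k * ⟪(p i : H), p k⟫) • (p k : H)) = lam i • (p i : H) := by
      rw [tsum_eq_single i]
      · rw [h1, mul_one]
      · intro k hk
        rw [p.orthonormal.2 (Ne.symm hk), mul_zero, zero_smul]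
    rw [h2, real_inner_smul_left, h1, mul_one]
  have hShpp : ∀ i, ⟪Sh (p i), p i⟫ = ∑' j, lamh j * b i j ^ 2 := by
    intro i
    have hx : Summable (fun j => (lamh j * ⟪(p i : H), q j⟫) ^ 2) := by
      apply rb_sq_summable (M := lamh 0) (hrow i)
      intro j
      rw [abs_of_nonneg (hlamh_nonneg j)]; exact hlamh_le j
    rw [hSh (p i), rb_inner q _ hx (p i)]
    apply tsum_congr; intro j
    have hsym : ⟪(q j : H), p i⟫ = ⟪(p i : H), q j⟫ := real_inner_comm _ _
    simp only [hbdef]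
    first
    | (rw [hsym]; ring)
    | (rw [← hsym]; ring)
    | ring
  -- the key lower bound on the mixed sum
  have hm_lb : ∀ i, lam i - 2 * ε ≤ ∑' j, lam j * b i j ^ 2 := by
    intro i
    have hpnorm : ‖(p i : H)‖ = 1 := p.orthonormal.1 i
    have h1 : |⟪S (p i) - Sh (p i), p i⟫| ≤ ε := by
      have h2 : S (p i) - Sh (p i) = (S - Sh) (p i) := by
        rw [ContinuousLinearMap.sub_apply]
      rw [h2]
      calc |⟪(S - Sh) (p i), p i⟫| ≤ ‖(S - Sh) (p i)‖ * ‖(p i : H)‖ :=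
            abs_real_inner_le_norm _ _
      _ ≤ (‖S - Sh‖ * ‖(p i : H)‖) * ‖(p i : H)‖ := by
            apply mul_le_mul_of_nonneg_right ((S - Sh).le_opNorm (p i)) (norm_nonneg _)
      _ ≤ ε := by rw [hpnorm]; simpa using hnorm
    have h3 : lam i - ε ≤ ∑' j, lamh j * b i j ^ 2 := by
      rw [inner_sub_left, hSpp i, hShpp i] at h1
      have := abs_le.mp h1
      linarith [this.1, this.2]
    have h4 : (∑' j, lamh j * b i j ^ 2) ≤ (∑' j, lam j * b i j ^ 2) + ε := by
      have h5 : ∀ j, lamh j * b i j ^ 2 ≤ lam j * b i j ^ 2 + ε * b i j ^ 2 := by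
        intro j
        have h6 := abs_le.mp (heig j)
        nlinarith [sq_nonneg (b i j), h6.1, h6.2]
      calc (∑' j, lamh j * b i j ^ 2) ≤ ∑' j, (lam j * b i j ^ 2 + ε * b i j ^ 2) :=
            Summable.tsum_le_tsum h5 (hlamhS i) ((hmS i).add ((hrow i).mul_left ε))
      _ = (∑' j, lam j * b i j ^ 2) + ε * ∑' j, b i j ^ 2 := by
            rw [Summable.tsum_add (hmS i) ((hrow i).mul_left ε), tsum_mul_left]
      _ = (∑' j, lam j * b i j ^ 2) + ε := by rw [hrow1 i, mul_one]
    linarith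
  -- the double sum F
  set F : ℕ → ℕ → ℝ := fun i j => (lam i - lam j) ^ 2 * b i j ^ 2 with hFdef
  have hFnn : ∀ i j, 0 ≤ F i j := fun i j => mul_nonneg (sq_nonneg _) (sq_nonneg _)
  have hFj : ∀ i, Summable (F i) := by
    intro i
    apply Summable.of_nonneg_of_le (fun j => hFnn i j) (fun j => ?_)
      ((hrow i).mul_left (lam 0 ^ 2))
    apply mul_le_mul_of_nonneg_right _ (sq_nonneg _)
    nlinarith [hlam_nonneg i, hlam_nonneg j, hlam_le i, hlam_le j]
  have hFi_val : ∀ i, (∑' j, F i j) =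
      lam i ^ 2 - 2 * lam i * (∑' j, lam j * b i j ^ 2) + ∑' j, lam j ^ 2 * b i j ^ 2 := by
    intro i
    have s1 : Summable (fun j => lam i ^ 2 * b i j ^ 2) := (hrow i).mul_left _
    have s2 : Summable (fun j => (2 * lam i) * (lam j * b i j ^ 2)) := (hmS i).mul_left _
    have s3 := hnS i
    calc (∑' j, F i j)
        = ∑' j, (lam i ^ 2 * b i j ^ 2 - (2 * lam i) * (lam j * b i j ^ 2)
            + lam j ^ 2 * b i j ^ 2) := tsum_congr fun j => by simp only [hFdef]; ring
    _ = (∑' j, (lam i ^ 2 * b i j ^ 2 - (2 * lam i) * (lam j * b i j ^ 2)))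
          + ∑' j, lam j ^ 2 * b i j ^ 2 := Summable.tsum_add (s1.sub s2) s3
    _ = (∑' j, lam i ^ 2 * b i j ^ 2) - (∑' j, (2 * lam i) * (lam j * b i j ^ 2))
          + ∑' j, lam j ^ 2 * b i j ^ 2 := by rw [Summable.tsum_sub s1 s2]
    _ = lam i ^ 2 * (∑' j, b i j ^ 2) - (2 * lam i) * (∑' j, lam j * b i j ^ 2)
          + ∑' j, lam j ^ 2 * b i j ^ 2 := by rw [tsum_mul_left, tsum_mul_left]
    _ = _ := by rw [hrow1 i]; ring
  -- summability of the pieces over i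
  have hm_ub : ∀ i, (∑' j, lam j * b i j ^ 2) ≤ lam 0 := by
    intro i
    calc (∑' j, lam j * b i j ^ 2) ≤ ∑' j, lam 0 * b i j ^ 2 :=
          Summable.tsum_le_tsum (fun j => mul_le_mul_of_nonneg_right (hlam_le j) (sq_nonneg _))
            (hmS i) ((hrow i).mul_left _)
    _ = lam 0 := by rw [tsum_mul_left, hrow1 i, mul_one]
  have hm_nn : ∀ i, 0 ≤ ∑' j, lam j * b i j ^ 2 :=
    fun i => tsum_nonneg fun j => mul_nonneg (hlam_nonneg j) (sq_nonneg _)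
  have hlm : Summable (fun i => lam i * (∑' j, lam j * b i j ^ 2)) := by
    apply Summable.of_nonneg_of_le (fun i => mul_nonneg (hlam_nonneg i) (hm_nn i))
      (fun i => ?_) (hlam_sum.mul_left (lam 0))
    rw [mul_comm (lam 0)]
    exact mul_le_mul_of_nonneg_left (hm_ub i) (hlam_nonneg i)
  -- Fubini for G
  have hGsw_sum : Summable (fun z : ℕ × ℕ => lam z.1 ^ 2 * b z.2 z.1 ^ 2) := by
    apply (summable_prod_of_nonneg ?_).mpr
    constructor
    · intro j
      exact ((hcol j).mul_left (lam j ^ 2)).congr fun i => rfl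
    · apply hsq_sum.congr
      intro j
      show lam j ^ 2 = ∑' i, lam j ^ 2 * b i j ^ 2
      rw [tsum_mul_left, hcol1 j, mul_one]
    · intro z; exact mul_nonneg (sq_nonneg _) (sq_nonneg _)
  have hG_sum : Summable (fun z : ℕ × ℕ => lam z.2 ^ 2 * b z.1 z.2 ^ 2) :=
    hGsw_sum.prod_symm
  have hn_sum : Summable (fun i => ∑' j, lam j ^ 2 * b i j ^ 2) :=
    ((summable_prod_of_nonneg
      (fun z => mul_nonneg (sq_nonneg _) (sq_nonneg _))).mp hG_sum).2
  have hn_tot : (∑' i, ∑' j, lam j ^ 2 * b i j ^ 2) = ∑' j, lam j ^ 2 := by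
    have hcomm := Summable.tsum_comm (f := fun i j => lam j ^ 2 * b i j ^ 2) hG_sum
    rw [← hcomm]
    apply tsum_congr; intro j
    rw [tsum_mul_left, hcol1 j, mul_one]
  -- summability of the row sums of F
  have hF_sum_i : Summable (fun i => ∑' j, F i j) := by
    apply Summable.congr ((hsq_sum.sub (hlm.mul_left 2)).add hn_sum)
    intro i
    rw [hFi_val i]; ring
  have hF_prod : Summable (Function.uncurry F) := by
    apply (summable_prod_of_nonneg (fun z => hFnn z.1 z.2)).mpr
    exact ⟨hFj, hF_sum_i⟩
  have hV_sum : Summable (fun j => ∑' i, F i j) :=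
    ((summable_prod_of_nonneg (fun z => hFnn z.2 z.1)).mp hF_prod.prod_symm).2
  have hV_tot : (∑' j, ∑' i, F i j) ≤ 4 * ε * T := by
    have hswap : (∑' j, ∑' i, F i j) = ∑' i, ∑' j, F i j := Summable.tsum_comm hF_prod
    rw [hswap]
    have sum1 : Summable (fun i => lam i ^ 2 - 2 * (lam i * (∑' j, lam j * b i j ^ 2))
        + ∑' j, lam j ^ 2 * b i j ^ 2) := (hsq_sum.sub (hlm.mul_left 2)).add hn_sum
    have sum2 : Summable (fun i => (∑' j, lam j ^ 2 * b i j ^ 2)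
        + ((4 * ε) * lam i - lam i ^ 2)) := hn_sum.add ((hlam_sum.mul_left (4 * ε)).sub hsq_sum)
    calc (∑' i, ∑' j, F i j)
        = ∑' i, (lam i ^ 2 - 2 * (lam i * (∑' j, lam j * b i j ^ 2))
            + ∑' j, lam j ^ 2 * b i j ^ 2) := tsum_congr fun i => by rw [hFi_val i]; ring
    _ ≤ ∑' i, ((∑' j, lam j ^ 2 * b i j ^ 2) + ((4 * ε) * lam i - lam i ^ 2)) := by
        apply Summable.tsum_le_tsum _ sum1 sum2
        intro i
        have hx := mul_le_mul_of_nonneg_left (hm_lb i) (hlam_nonneg i)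
        nlinarith [hx]
    _ = (∑' i, ∑' j, lam j ^ 2 * b i j ^ 2)
          + ((∑' i, (4 * ε) * lam i) - ∑' i, lam i ^ 2) := by
        rw [Summable.tsum_add hn_sum ((hlam_sum.mul_left (4 * ε)).sub hsq_sum),
          Summable.tsum_sub (hlam_sum.mul_left (4 * ε)) hsq_sum]
    _ = 4 * ε * T := by rw [hn_tot, tsum_mul_left, ← hTdef]; ring
  -- pointwise estimate
  have key : ∀ u : H, ‖fS u - fSh u‖ ≤ (L⁻¹ * (2 * Real.sqrt (ε * T) + ε)) * ‖u‖ := by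
    intro u
    have hsa : Summable (fun i => ⟪u, p i⟫ ^ 2) := (rb_parseval p u).1
    have hsa_val : (∑' i, ⟪u, p i⟫ ^ 2) = ‖u‖ ^ 2 := (rb_parseval p u).2
    have hsc : Summable (fun j => ⟪u, q j⟫ ^ 2) := (rb_parseval q u).1
    have hsc_val : (∑' j, ⟪u, q j⟫ ^ 2) = ‖u‖ ^ 2 := (rb_parseval q u).2
    have hx1 : Summable (fun i => (f (lam i) * ⟪u, p i⟫) ^ 2) := rb_sq_summable hsa hfM
    have hx2 : Summable (fun j => (f (lamh j) * ⟪u, q j⟫) ^ 2) := rb_sq_summable hsc hfMh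
    have hx3 : Summable (fun j => (f (lam j) * ⟪u, q j⟫) ^ 2) := rb_sq_summable hsc hfM
    set w2 : H := ∑' j, (f (lam j) * ⟪u, q j⟫) • (q j : H) with hw2def
    -- Part A
    have hdco : Summable (fun j => ((f (lam j) - f (lamh j)) * ⟪u, q j⟫) ^ 2) := by
      apply rb_sq_summable (M := L⁻¹ * ε) hsc
      intro j
      calc |f (lam j) - f (lamh j)| ≤ L⁻¹ * |lam j - lamh j| := hf _ _
      _ ≤ L⁻¹ * ε := mul_le_mul_of_nonneg_left (heig j) hLinv
    have hA : ‖w2 - fSh u‖ ≤ L⁻¹ * ε * ‖u‖ := by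
      have h1 := rb_hasSum q _ hx3
      have h2 := rb_hasSum q _ hx2
      have h3 := h1.sub h2
      rw [← hfSh u, ← hw2def] at h3
      have h4 : (fun j => (f (lam j) * ⟪u, q j⟫) • (q j : H)
          - (f (lamh j) * ⟪u, q j⟫) • (q j : H))
          = fun j => ((f (lam j) - f (lamh j)) * ⟪u, q j⟫) • (q j : H) := by
        funext j; rw [← sub_smul]; congr 1; ring
      rw [h4] at h3
      have h5 : w2 - fSh u = ∑' j, ((f (lam j) - f (lamh j)) * ⟪u, q j⟫) • (q j : H) :=
        h3.tsum_eq.symm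
      have h6 : ‖w2 - fSh u‖ ^ 2 = ∑' j, ((f (lam j) - f (lamh j)) * ⟪u, q j⟫) ^ 2 := by
        rw [h5]; exact rb_norm_sq q _ hdco
      have h7 : (∑' j, ((f (lam j) - f (lamh j)) * ⟪u, q j⟫) ^ 2)
          ≤ (L⁻¹ * ε) ^ 2 * ‖u‖ ^ 2 := by
        rw [← hsc_val, ← tsum_mul_left]
        apply Summable.tsum_le_tsum _ hdco (hsc.mul_left _)
        intro j
        have h8 : |f (lam j) - f (lamh j)| ≤ L⁻¹ * ε := by
          calc |f (lam j) - f (lamh j)| ≤ L⁻¹ * |lam j - lamh j| := hf _ _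
          _ ≤ L⁻¹ * ε := mul_le_mul_of_nonneg_left (heig j) hLinv
        have h9 : (f (lam j) - f (lamh j)) ^ 2 ≤ (L⁻¹ * ε) ^ 2 := by
          nlinarith [abs_nonneg (f (lam j) - f (lamh j)), sq_abs (f (lam j) - f (lamh j))]
        nlinarith [sq_nonneg (⟪u, q j⟫ : ℝ)]
      apply rb_sqle (mul_nonneg (mul_nonneg hLinv hε.le) (norm_nonneg u)) _
        (norm_nonneg _)
      calc ‖w2 - fSh u‖ ^ 2 ≤ (L⁻¹ * ε) ^ 2 * ‖u‖ ^ 2 := by rw [h6]; exact h7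
      _ = (L⁻¹ * ε * ‖u‖) ^ 2 := by ring
    -- Part B
    set W : ℕ → ℝ := fun j => ∑' i, (f (lam i) - f (lam j)) ^ 2 * b i j ^ 2 with hWdef
    have hfd_bd : ∀ i j, |f (lam i) - f (lam j)| ≤ L⁻¹ * lam 0 := by
      intro i j
      have h2 : |lam i - lam j| ≤ lam 0 := by
        rw [abs_le]
        constructor <;> [linarith [hlam_le j, hlam_nonneg i]; linarith [hlam_le i, hlam_nonneg j]]
      calc |f (lam i) - f (lam j)| ≤ L⁻¹ * |lam i - lam j| := hf _ _
      _ ≤ L⁻¹ * lam 0 := mul_le_mul_of_nonneg_left h2 hLinv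
    have hy_sum : ∀ j, Summable (fun i => ((f (lam i) - f (lam j)) * b i j) ^ 2) :=
      fun j => rb_sq_summable (hcol j) (fun i => hfd_bd i j)
    have hW_eq : ∀ j, (∑' i, ((f (lam i) - f (lam j)) * b i j) ^ 2) = W j :=
      fun j => tsum_congr fun i => by rw [mul_pow]
    have hW_nn : ∀ j, 0 ≤ W j :=
      fun j => tsum_nonneg fun i => mul_nonneg (sq_nonneg _) (sq_nonneg _)
    have hg_val : ∀ j, ⟪fS u - w2, q j⟫
        = ∑' i, (⟪u, p i⟫ * ((f (lam i) - f (lam j)) * b i j)) := by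
      intro j
      have habs : Summable (fun i => |⟪u, p i⟫ * b i j|) := rb_cs_summable hsa (hcol j)
      have hS1 : Summable (fun i => (f (lam i) * ⟪u, p i⟫) * b i j) := by
        apply Summable.of_abs
        apply Summable.of_nonneg_of_le (fun i => abs_nonneg _) (fun i => ?_)
          (habs.mul_left M)
        calc |f (lam i) * ⟪u, p i⟫ * b i j| = |f (lam i)| * |⟪u, p i⟫ * b i j| := by
              rw [mul_assoc, abs_mul]
        _ ≤ M * |⟪u, p i⟫ * b i j| := mul_le_mul_of_nonneg_right (hfM i) (abs_nonneg _)
      have hS2 : Summable (fun i => f (lam j) * (⟪u, p i⟫ * b i j)) :=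
        (habs.of_abs).mul_left _
      have e1 : ⟪fS u, q j⟫ = ∑' i, (f (lam i) * ⟪u, p i⟫) * b i j := by
        rw [hfS u, rb_inner p (fun i => f (lam i) * ⟪u, p i⟫) hx1 (q j)]
      have e2 : ⟪w2, q j⟫ = f (lam j) * ⟪u, q j⟫ := by
        rw [hw2def]; exact rb_coeff q _ hx3 j
      have e3 : ⟪u, q j⟫ = ∑' i, ⟪u, p i⟫ * b i j := by
        simp only [hbdef]
        exact (p.tsum_inner_mul_inner u (q j)).symm
      rw [inner_sub_left, e1, e2, e3, ← tsum_mul_left, ← Summable.tsum_sub hS1 hS2]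
      apply tsum_congr; intro i; ring
    have hg_bd : ∀ j, ⟪fS u - w2, q j⟫ ^ 2 ≤ ‖u‖ ^ 2 * W j := by
      intro j
      have hy := hy_sum j
      have h1 : |⟪fS u - w2, q j⟫|
          ≤ ∑' i, |⟪u, p i⟫ * ((f (lam i) - f (lam j)) * b i j)| := by
        rw [hg_val j]
        have hsum' : Summable (fun i =>
            ‖⟪u, p i⟫ * ((f (lam i) - f (lam j)) * b i j)‖) := by
          simpa only [Real.norm_eq_abs] using rb_cs_summable hsa hy
        simpa only [Real.norm_eq_abs] using norm_tsum_le_tsum_norm hsum'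
      have h2 : (∑' i, |⟪u, p i⟫ * ((f (lam i) - f (lam j)) * b i j)|)
          ≤ Real.sqrt (‖u‖ ^ 2) * Real.sqrt (W j) := by
        rw [← hsa_val, ← hW_eq j]
        exact rb_cs_le hsa hy
      have h3 : Real.sqrt (‖u‖ ^ 2) = ‖u‖ := Real.sqrt_sq (norm_nonneg u)
      have h4 : |⟪fS u - w2, q j⟫| ≤ ‖u‖ * Real.sqrt (W j) := by
        rw [h3] at h2; exact h1.trans h2
      calc ⟪fS u - w2, q j⟫ ^ 2 = |⟪fS u - w2, q j⟫| ^ 2 := (sq_abs _).symm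
      _ ≤ (‖u‖ * Real.sqrt (W j)) ^ 2 := by
          apply pow_le_pow_left₀ (abs_nonneg _) h4
      _ = ‖u‖ ^ 2 * Real.sqrt (W j) ^ 2 := by ring
      _ = ‖u‖ ^ 2 * W j := by rw [Real.sq_sqrt (hW_nn j)]
    have hFcol : ∀ j, Summable (fun i => F i j) :=
      fun j => ((summable_prod_of_nonneg (fun z => hFnn z.2 z.1)).mp hF_prod.prod_symm).1 j
    have hW_le : ∀ j, W j ≤ L⁻¹ ^ 2 * ∑' i, F i j := by
      intro j
      simp only [hWdef]
      rw [← tsum_mul_left]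
      apply Summable.tsum_le_tsum _ ((hy_sum j).congr fun i => mul_pow _ _ 2)
        ((hFcol j).mul_left (L⁻¹ ^ 2))
      intro i
      have h8 := hf (lam i) (lam j)
      have h9 : (f (lam i) - f (lam j)) ^ 2 ≤ (L⁻¹ * |lam i - lam j|) ^ 2 := by
        nlinarith [abs_nonneg (f (lam i) - f (lam j)), sq_abs (f (lam i) - f (lam j)),
          mul_nonneg hLinv (abs_nonneg (lam i - lam j))]
      have h10 : (L⁻¹ * |lam i - lam j|) ^ 2 = L⁻¹ ^ 2 * (lam i - lam j) ^ 2 := by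
        rw [mul_pow, sq_abs]
      simp only [hFdef]
      nlinarith [sq_nonneg (b i j), h9, h10]
    have hW_sum : Summable W :=
      Summable.of_nonneg_of_le hW_nn hW_le (hV_sum.mul_left (L⁻¹ ^ 2))
    have hB2 : ‖fS u - w2‖ ^ 2 ≤ ‖u‖ ^ 2 * (L⁻¹ ^ 2 * (4 * ε * T)) := by
      have hpar := rb_parseval q (fS u - w2)
      calc ‖fS u - w2‖ ^ 2 = ∑' j, ⟪fS u - w2, q j⟫ ^ 2 := hpar.2.symm
      _ ≤ ∑' j, ‖u‖ ^ 2 * W j := Summable.tsum_le_tsum hg_bd hpar.1 (hW_sum.mul_left _)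
      _ = ‖u‖ ^ 2 * ∑' j, W j := tsum_mul_left
      _ ≤ ‖u‖ ^ 2 * (L⁻¹ ^ 2 * (4 * ε * T)) := by
          apply mul_le_mul_of_nonneg_left _ (sq_nonneg _)
          calc (∑' j, W j) ≤ ∑' j, L⁻¹ ^ 2 * ∑' i, F i j :=
                Summable.tsum_le_tsum hW_le hW_sum (hV_sum.mul_left _)
          _ = L⁻¹ ^ 2 * ∑' j, ∑' i, F i j := tsum_mul_left
          _ ≤ L⁻¹ ^ 2 * (4 * ε * T) := mul_le_mul_of_nonneg_left hV_tot (sq_nonneg _)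
    have hB : ‖fS u - w2‖ ≤ L⁻¹ * (2 * Real.sqrt (ε * T)) * ‖u‖ := by
      apply rb_sqle (mul_nonneg (mul_nonneg hLinv (by positivity)) (norm_nonneg u)) _
        (norm_nonneg _)
      have hq2 : (L⁻¹ * (2 * Real.sqrt (ε * T)) * ‖u‖) ^ 2
          = ‖u‖ ^ 2 * (L⁻¹ ^ 2 * (4 * ε * T)) := by
        have h0 : Real.sqrt (ε * T) ^ 2 = ε * T := Real.sq_sqrt (by positivity)
        calc (L⁻¹ * (2 * Real.sqrt (ε * T)) * ‖u‖) ^ 2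
            = ‖u‖ ^ 2 * (L⁻¹ ^ 2 * (4 * Real.sqrt (ε * T) ^ 2)) := by ring
        _ = ‖u‖ ^ 2 * (L⁻¹ ^ 2 * (4 * ε * T)) := by rw [h0]; ring
      rw [hq2]
      exact hB2
    have hsplit : fS u - fSh u = (fS u - w2) + (w2 - fSh u) := by abel
    calc ‖fS u - fSh u‖ = ‖(fS u - w2) + (w2 - fSh u)‖ := by rw [hsplit]
    _ ≤ ‖fS u - w2‖ + ‖w2 - fSh u‖ := norm_add_le _ _
    _ ≤ L⁻¹ * (2 * Real.sqrt (ε * T)) * ‖u‖ + L⁻¹ * ε * ‖u‖ := add_le_add hB hA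
    _ = (L⁻¹ * (2 * Real.sqrt (ε * T) + ε)) * ‖u‖ := by ring
  -- final algebra
  have hfinal : L⁻¹ * (2 * Real.sqrt (ε * T) + ε)
      ≤ 2 * L⁻¹ * Real.sqrt (Real.sqrt 2 * T * ε + ε ^ 2) := by
    have hs0 : 0 ≤ Real.sqrt (ε * T) := Real.sqrt_nonneg _
    have hs2 : Real.sqrt (ε * T) ^ 2 = ε * T := Real.sq_sqrt (by positivity)
    have hr0 : 0 ≤ Real.sqrt (Real.sqrt 2 * T * ε + ε ^ 2) := Real.sqrt_nonneg _
    have hrarg : 0 ≤ Real.sqrt 2 * T * ε + ε ^ 2 := by positivity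
    have hr2 : Real.sqrt (Real.sqrt 2 * T * ε + ε ^ 2) ^ 2 = Real.sqrt 2 * T * ε + ε ^ 2 :=
      Real.sq_sqrt hrarg
    have h14 : (1.414 : ℝ) ≤ Real.sqrt 2 := by
      have h : (1.414 : ℝ) = Real.sqrt (1.414 ^ 2) := (Real.sqrt_sq (by norm_num)).symm
      rw [h]; exact Real.sqrt_le_sqrt (by norm_num)
    have hTe : (1.414 : ℝ) * (T * ε) ≤ Real.sqrt 2 * (T * ε) :=
      mul_le_mul_of_nonneg_right h14 (mul_nonneg hT0 hε.le)
    have hmain : 2 * Real.sqrt (ε * T) + ε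
        ≤ 2 * Real.sqrt (Real.sqrt 2 * T * ε + ε ^ 2) := by
      apply rb_sqle (by positivity) _ (by positivity)
      nlinarith [hs2, hr2, hTe, hs0, hε.le,
        sq_nonneg (Real.sqrt (ε * T) - 1.208 * ε), mul_nonneg hs0 hε.le]
    calc L⁻¹ * (2 * Real.sqrt (ε * T) + ε)
        ≤ L⁻¹ * (2 * Real.sqrt (Real.sqrt 2 * T * ε + ε ^ 2)) :=
          mul_le_mul_of_nonneg_left hmain hLinv
    _ = 2 * L⁻¹ * Real.sqrt (Real.sqrt 2 * T * ε + ε ^ 2) := by ring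
  apply ContinuousLinearMap.opNorm_le_bound _
    (mul_nonneg (mul_nonneg (by norm_num) hLinv) (Real.sqrt_nonneg _))
  intro u
  rw [ContinuousLinearMap.sub_apply]
  exact (key u).trans (mul_le_mul_of_nonneg_right hfinal (norm_nonneg u))
end

section
/- Let B : [0,∞) → [0,∞) be nondecreasing with B(t+a) ≤ B(t) + a/2 for all t, a ≥ 0. Assume ‖Σ − Σ̂‖_∞ ≤ B(λ_1) and, for all i ≥ 1, |λ_i − λ̂_i| ≤ B(λ_i) and |λ_i − λ̂_i| ≤ B(λ̂_i). Let Σ̃ be the operator with the same eigenvectors q_i as Σ̂ and eigenvalues λ̃_i = max(λ̂_i − B(λ̂_i), 0). Then for every 1/L-Lipschitz function f : ℝ → ℝ and every positive integer τ, ‖f(Σ) − f(Σ̃)‖_HS ≤ L^{-1} ‖Σ − Σ̃‖_HS ≤ L^{-1} √( 13 τ B(λ_1)² + 2 Σ_{i>τ} λ_i² ). -/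
open scoped RealInnerProductSpace

open scoped ENNReal

section helpers
variable {H' : Type*} [NormedAddCommGroup H'] [InnerProductSpace ℝ H'] [CompleteSpace H']

omit [CompleteSpace H'] in
lemma parseval_sq (b : HilbertBasis ℕ ℝ H') (x : H') :
    HasSum (fun i => ⟪x, b i⟫ ^ 2) (‖x‖ ^ 2) := by
  have h := b.hasSum_inner_mul_inner x x
  rw [real_inner_self_eq_norm_sq] at h
  refine h.congr_fun fun i => ?_
  rw [real_inner_comm x (b i), sq]

lemma exists_hasSum_smul (b : HilbertBasis ℕ ℝ H') (c : ℕ → ℝ)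
    (hc : Summable (fun i => c i ^ 2)) :
    ∃ x : H', HasSum (fun i => c i • b i) x := by
  have hmem : Memℓp c 2 := by
    apply memℓp_gen
    have : (fun i => ‖c i‖ ^ (2 : ℝ≥0∞).toReal) = fun i => c i ^ 2 := by
      funext i
      rw [ENNReal.toReal_ofNat, Real.norm_eq_abs, Real.rpow_two, sq_abs]
    rw [this]; exact hc
  have hx := b.hasSum_repr_symm (⟨c, hmem⟩ : lp (fun _ : ℕ => ℝ) 2)
  exact ⟨_, hx⟩

lemma inner_tsum_smul (b : HilbertBasis ℕ ℝ H') (c : ℕ → ℝ)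
    (hc : Summable (fun i => c i ^ 2)) (j : ℕ) :
    ⟪∑' i, c i • b i, b j⟫ = c j := by
  classical
  obtain ⟨x, hx⟩ := exists_hasSum_smul b c hc
  rw [hx.tsum_eq]
  have h2 : HasSum (fun i => ⟪b j, c i • b i⟫) ⟪b j, x⟫ :=
    (innerSL ℝ (b j)).hasSum hx
  have h3 : HasSum (fun i : ℕ => if i = j then c j else 0) ⟪b j, x⟫ := by
    refine h2.congr_fun fun i => ?_
    rw [real_inner_smul_right, orthonormal_iff_ite.mp b.orthonormal j i]
    by_cases h : i = j
    · simp [h]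
    · rw [if_neg h, if_neg (fun hji => h hji.symm), mul_zero]
  have h4 := hasSum_ite_eq j (c j)
  rw [real_inner_comm, h3.unique h4]

lemma diag_coeff (b : HilbertBasis ℕ ℝ H') (g : ℕ → ℝ) (C : ℝ)
    (hg : ∀ i, |g i| ≤ C) (u : H') (j : ℕ) :
    ⟪∑' i, (g i * ⟪u, b i⟫) • b i, b j⟫ = g j * ⟪u, b j⟫ := by
  apply inner_tsum_smul
  have hs := ((parseval_sq b u).summable).mul_left (C ^ 2)
  refine Summable.of_nonneg_of_le (fun i => sq_nonneg _) (fun i => ?_) hs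
  rw [mul_pow]
  refine mul_le_mul_of_nonneg_right ?_ (sq_nonneg _)
  calc g i ^ 2 = |g i| ^ 2 := (sq_abs _).symm
    _ ≤ C ^ 2 := by
        have h0 := abs_nonneg (g i)
        nlinarith [hg i]

omit [CompleteSpace H'] in
lemma diag_eig (b : HilbertBasis ℕ ℝ H') (g : ℕ → ℝ) (n : ℕ) :
    (∑' i, (g i * ⟪b n, b i⟫) • b i) = g n • b n := by
  rw [tsum_eq_single n]
  · rw [orthonormal_iff_ite.mp b.orthonormal n n]; simp
  · intro i hi
    rw [orthonormal_iff_ite.mp b.orthonormal n i, if_neg (fun h => hi h.symm)]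
    simp

end helpers

set_option maxHeartbeats 1000000 in
/-- Frobenius-norm bound for the smooth spectral cut-off applied to the shrunk estimator
`Σ̃` (same eigenvectors `q_i` as `Σ̂`, eigenvalues `λ̃_i = max(λ̂_i - B(λ̂_i), 0)`):
for every `1/L`-Lipschitz `f` and positive integer `τ`,
`‖f(Σ) - f(Σ̃)‖_HS ≤ L⁻¹ ‖Σ - Σ̃‖_HS ≤ L⁻¹ √(13 τ B(λ_1)² + 2 Σ_{i>τ} λ_i²)`.
Here the Hilbert–Schmidt norm of an operator `T` is expressed through the orthonormal
basis `q` as `√(∑' n, ‖T (q n)‖²)`; `λ_1 = lam 0` and the tail sum over paper indices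
`i > τ` is `∑' i, lam (τ + i) ^ 2`. -/
theorem robust_pca_smooth_cutoff_hs_bound
    {H : Type*} [NormedAddCommGroup H] [InnerProductSpace ℝ H] [CompleteSpace H]
    (p q : HilbertBasis ℕ ℝ H)
    (lam lamh : ℕ → ℝ)
    (hlam_anti : Antitone lam) (hlam_nonneg : ∀ i, 0 ≤ lam i)
    (hlam_sum : Summable lam)
    (hlamh_anti : Antitone lamh) (hlamh_nonneg : ∀ i, 0 ≤ lamh i)
    (hlamh_sum : Summable lamh)
    (S Sh : H →L[ℝ] H)
    (hS : ∀ u, S u = ∑' i, (lam i * ⟪u, p i⟫) • p i)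
    (hSh : ∀ u, Sh u = ∑' i, (lamh i * ⟪u, q i⟫) • q i)
    (B : ℝ → ℝ)
    (hB_nonneg : ∀ t, 0 ≤ t → 0 ≤ B t)
    (hB_mono : ∀ s t, 0 ≤ s → s ≤ t → B s ≤ B t)
    (hB_half : ∀ t a, 0 ≤ t → 0 ≤ a → B (t + a) ≤ B t + a / 2)
    (hnorm : ‖S - Sh‖ ≤ B (lam 0))
    (heig : ∀ i : ℕ, |lam i - lamh i| ≤ B (lam i) ∧ |lam i - lamh i| ≤ B (lamh i))
    (St : H →L[ℝ] H)
    (hSt : ∀ u, St u = ∑' i, (max (lamh i - B (lamh i)) 0 * ⟪u, q i⟫) • q i)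
    (L : ℝ) (hL : 0 < L)
    (f : ℝ → ℝ) (hf : ∀ s t : ℝ, |f s - f t| ≤ L⁻¹ * |s - t|)
    (fS fSt : H →L[ℝ] H)
    (hfS : ∀ u, fS u = ∑' i, (f (lam i) * ⟪u, p i⟫) • p i)
    (hfSt : ∀ u, fSt u = ∑' i, (f (max (lamh i - B (lamh i)) 0) * ⟪u, q i⟫) • q i)
    (τ : ℕ) (hτ : 1 ≤ τ) :
    Real.sqrt (∑' n : ℕ, ‖(fS - fSt) (q n)‖ ^ 2) ≤
        L⁻¹ * Real.sqrt (∑' n : ℕ, ‖(S - St) (q n)‖ ^ 2) ∧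
      L⁻¹ * Real.sqrt (∑' n : ℕ, ‖(S - St) (q n)‖ ^ 2) ≤
        L⁻¹ * Real.sqrt (13 * τ * B (lam 0) ^ 2 + 2 * ∑' i : ℕ, lam (τ + i) ^ 2) := by
  classical
  set lt : ℕ → ℝ := fun i => max (lamh i - B (lamh i)) 0 with hlt_def
  set B1 : ℝ := B (lam 0) with hB1_def
  have hB1 : 0 ≤ B1 := hB_nonneg _ (hlam_nonneg 0)
  have hLinv : (0 : ℝ) ≤ L⁻¹ := inv_nonneg.mpr hL.le
  have hlt_nonneg : ∀ n, 0 ≤ lt n := fun n => le_max_right _ _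
  have hlt_le_lamh : ∀ n, lt n ≤ lamh n := fun n =>
    max_le (by have := hB_nonneg _ (hlamh_nonneg n); linarith) (hlamh_nonneg n)
  have hgap : ∀ n, lamh n - lt n ≤ 3 / 2 * B1 := by
    intro n
    have h1 : lamh n - lt n ≤ B (lamh n) := by
      have := le_max_left (lamh n - B (lamh n)) 0; simp only [hlt_def]; linarith
    have h2 : B (lamh n) ≤ B (lamh 0) :=
      hB_mono _ _ (hlamh_nonneg n) (hlamh_anti (Nat.zero_le n))
    have h3 : lamh 0 ≤ lam 0 + B1 := by
      have := (abs_le.mp (heig 0).1).1; linarith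
    have h4 : B (lamh 0) ≤ B (lam 0 + B1) := hB_mono _ _ (hlamh_nonneg 0) h3
    have h5 : B (lam 0 + B1) ≤ B1 + B1 / 2 := hB_half _ _ (hlam_nonneg 0) hB1
    linarith
  have hlt_le_lam : ∀ n, lt n ≤ lam n := by
    intro n
    refine max_le ?_ (hlam_nonneg n)
    have := (abs_le.mp (heig n).2).1; linarith
  -- coefficient bounds
  have hlam_bd : ∀ i, |lam i| ≤ lam 0 := fun i => by
    rw [abs_of_nonneg (hlam_nonneg i)]; exact hlam_anti (Nat.zero_le i)
  have hlamh_bd : ∀ i, |lamh i| ≤ lamh 0 := fun i => by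
    rw [abs_of_nonneg (hlamh_nonneg i)]; exact hlamh_anti (Nat.zero_le i)
  have hlt_bd : ∀ i, |lt i| ≤ lamh 0 := fun i => by
    rw [abs_of_nonneg (hlt_nonneg i)]
    exact (hlt_le_lamh i).trans (hlamh_anti (Nat.zero_le i))
  have hfabs : ∀ t : ℝ, 0 ≤ t → |f t| ≤ |f 0| + L⁻¹ * t := by
    intro t ht
    have h1 := hf t 0
    rw [sub_zero, abs_of_nonneg ht] at h1
    calc |f t| = |f t - f 0 + f 0| := by ring_nf
      _ ≤ |f t - f 0| + |f 0| := abs_add_le _ _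
      _ ≤ |f 0| + L⁻¹ * t := by linarith
  have hflam_bd : ∀ i, |f (lam i)| ≤ |f 0| + L⁻¹ * lam 0 := by
    intro i
    refine (hfabs _ (hlam_nonneg i)).trans ?_
    have := mul_le_mul_of_nonneg_left (hlam_anti (Nat.zero_le i)) hLinv
    linarith
  have hflt_bd : ∀ i, |f (lt i)| ≤ |f 0| + L⁻¹ * lamh 0 := by
    intro i
    refine (hfabs _ (hlt_nonneg i)).trans ?_
    have h := (hlt_le_lamh i).trans (hlamh_anti (Nat.zero_le i))
    have := mul_le_mul_of_nonneg_left h hLinv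
    linarith
  -- coefficients of the operators
  have cS : ∀ u j, ⟪S u, p j⟫ = lam j * ⟪u, p j⟫ := fun u j => by
    rw [hS u]; exact diag_coeff p lam (lam 0) hlam_bd u j
  have cSh : ∀ u j, ⟪Sh u, q j⟫ = lamh j * ⟪u, q j⟫ := fun u j => by
    rw [hSh u]; exact diag_coeff q lamh (lamh 0) hlamh_bd u j
  have cSt : ∀ u j, ⟪St u, q j⟫ = lt j * ⟪u, q j⟫ := fun u j => by
    rw [hSt u]; exact diag_coeff q lt (lamh 0) hlt_bd u j
  -- eigen identities
  have SP : ∀ j, S (p j) = lam j • p j := fun j => by rw [hS]; exact diag_eig p lam j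
  have StQ : ∀ n, St (q n) = lt n • q n := fun n => by rw [hSt]; exact diag_eig q lt n
  have fStQ : ∀ n, fSt (q n) = f (lt n) • q n := fun n => by
    rw [hfSt]; exact diag_eig q (fun i => f (lt i)) n
  have cfS : ∀ u j, ⟪fS u, p j⟫ = f (lam j) * ⟪u, p j⟫ := fun u j => by
    rw [hfS u]; exact diag_coeff p (fun i => f (lam i)) (|f 0| + L⁻¹ * lam 0) hflam_bd u j
  -- basic products
  set c : ℕ → ℕ → ℝ := fun j n => ⟪q n, p j⟫ ^ 2 with hc_def
  have hc_nonneg : ∀ j n, 0 ≤ c j n := fun j n => sq_nonneg _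
  have hcsum1 : ∀ n, HasSum (fun j => c j n) 1 := by
    intro n
    have h := parseval_sq p (q n)
    rwa [q.orthonormal.1 n, one_pow] at h
  have hcsum2 : ∀ j, HasSum (fun n => c j n) 1 := by
    intro j
    have h := parseval_sq q (p j)
    rw [p.orthonormal.1 j, one_pow] at h
    refine h.congr_fun fun n => ?_
    rw [hc_def]; rw [real_inner_comm]
  -- HasSum expansions
  have hA : ∀ n, HasSum (fun j => (lam j - lt n) ^ 2 * c j n) (‖(S - St) (q n)‖ ^ 2) := by
    intro n
    refine (parseval_sq p ((S - St) (q n))).congr_fun fun j => ?_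
    have : ⟪(S - St) (q n), p j⟫ = (lam j - lt n) * ⟪q n, p j⟫ := by
      rw [ContinuousLinearMap.sub_apply, inner_sub_left, cS, StQ, real_inner_smul_left]
      ring
    rw [this, hc_def]; ring
  have hFA : ∀ n, HasSum (fun j => (f (lam j) - f (lt n)) ^ 2 * c j n)
      (‖(fS - fSt) (q n)‖ ^ 2) := by
    intro n
    refine (parseval_sq p ((fS - fSt) (q n))).congr_fun fun j => ?_
    have : ⟪(fS - fSt) (q n), p j⟫ = (f (lam j) - f (lt n)) * ⟪q n, p j⟫ := by
      rw [ContinuousLinearMap.sub_apply, inner_sub_left, cfS, fStQ, real_inner_smul_left]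
      ring
    rw [this, hc_def]; ring
  have hD : ∀ j, HasSum (fun n => (lam j - lt n) ^ 2 * c j n) (‖(S - St) (p j)‖ ^ 2) := by
    intro j
    refine (parseval_sq q ((S - St) (p j))).congr_fun fun n => ?_
    have : ⟪(S - St) (p j), q n⟫ = (lam j - lt n) * ⟪q n, p j⟫ := by
      rw [ContinuousLinearMap.sub_apply, inner_sub_left, cSt, SP, real_inner_smul_left,
        real_inner_comm (p j) (q n)]
      ring
    rw [this, hc_def]; ring
  -- operator norm bounds
  have hShSt : ∀ u : H, ‖(Sh - St) u‖ ≤ 3 / 2 * B1 * ‖u‖ := by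
    intro u
    have h1 : HasSum (fun i => (lamh i - lt i) ^ 2 * ⟪u, q i⟫ ^ 2) (‖(Sh - St) u‖ ^ 2) := by
      refine (parseval_sq q ((Sh - St) u)).congr_fun fun i => ?_
      have : ⟪(Sh - St) u, q i⟫ = (lamh i - lt i) * ⟪u, q i⟫ := by
        rw [ContinuousLinearMap.sub_apply, inner_sub_left, cSh, cSt]; ring
      rw [this]; ring
    have h2 : HasSum (fun i => (3 / 2 * B1) ^ 2 * ⟪u, q i⟫ ^ 2)
        ((3 / 2 * B1) ^ 2 * ‖u‖ ^ 2) := (parseval_sq q u).mul_left _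
    have h3 : ‖(Sh - St) u‖ ^ 2 ≤ (3 / 2 * B1) ^ 2 * ‖u‖ ^ 2 := by
      refine hasSum_le (fun i => ?_) h1 h2
      refine mul_le_mul_of_nonneg_right ?_ (sq_nonneg _)
      have h0 : 0 ≤ lamh i - lt i := by have := hlt_le_lamh i; linarith
      nlinarith [hgap i]
    calc ‖(Sh - St) u‖ = Real.sqrt (‖(Sh - St) u‖ ^ 2) := by
          rw [Real.sqrt_sq (norm_nonneg _)]
      _ ≤ Real.sqrt ((3 / 2 * B1 * ‖u‖) ^ 2) := by
          apply Real.sqrt_le_sqrt; nlinarith [h3]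
      _ = 3 / 2 * B1 * ‖u‖ := Real.sqrt_sq (by positivity)
  have hKgen : ∀ x : H, ‖x‖ = 1 → ‖(S - St) x‖ ≤ 5 / 2 * B1 := by
    intro x hx
    have hsplit : (S - St) x = (S - Sh) x + (Sh - St) x := by
      rw [← ContinuousLinearMap.add_apply, sub_add_sub_cancel]
    have h1 : ‖(S - Sh) x‖ ≤ B1 := by
      have := (S - Sh).le_opNorm x
      rw [hx, mul_one] at this
      linarith
    have h2 : ‖(Sh - St) x‖ ≤ 3 / 2 * B1 := by
      have := hShSt x; rw [hx, mul_one] at this; linarith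
    calc ‖(S - St) x‖ ≤ ‖(S - Sh) x‖ + ‖(Sh - St) x‖ := by rw [hsplit]; exact norm_add_le _ _
      _ ≤ 5 / 2 * B1 := by linarith
  have KQ : ∀ n, ‖(S - St) (q n)‖ ≤ 5 / 2 * B1 := fun n => hKgen _ (q.orthonormal.1 n)
  have KP : ∀ j, ‖(S - St) (p j)‖ ≤ 5 / 2 * B1 := fun j => hKgen _ (p.orthonormal.1 j)
  -- the summation machinery
  set t : ℕ → ℕ → ℝ := fun j n => (lam j - lt n) ^ 2 * c j n with ht_def
  set a : ℕ → ℝ := fun n => ‖(S - St) (q n)‖ ^ 2 with ha_def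
  set al : ℕ → ℝ := fun n => ∑ j ∈ Finset.range τ, t j n with hal_def
  set ga : ℕ → ℝ := fun n => ∑' k, lam (k + τ) ^ 2 * c (k + τ) n with hga_def
  set T : ℝ := ∑' k, lam (k + τ) ^ 2 with hT_def
  have ht_nonneg : ∀ j n, 0 ≤ t j n := fun j n => mul_nonneg (sq_nonneg _) (hc_nonneg j n)
  have hlamsq : Summable (fun i => lam i ^ 2) := by
    refine Summable.of_nonneg_of_le (fun i => sq_nonneg _) (fun i => ?_)
      (hlam_sum.mul_left (lam 0))
    have := hlam_anti (Nat.zero_le i)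
    nlinarith [hlam_nonneg i]
  have hltsq_sum : Summable (fun n => lt n ^ 2) := by
    refine Summable.of_nonneg_of_le (fun n => sq_nonneg _) (fun n => ?_) hlamsq
    nlinarith [hlt_nonneg n, hlt_le_lam n]
  -- gamma summability via product sums
  have hF : Summable (fun kn : ℕ × ℕ => lam (kn.1 + τ) ^ 2 * c (kn.1 + τ) kn.2) := by
    apply (summable_prod_of_nonneg ?_).mpr
    · constructor
      · intro k
        dsimp only
        exact ((hcsum2 (k + τ)).summable).mul_left _
      · dsimp only
        refine Summable.congr ((summable_nat_add_iff τ).mpr hlamsq) fun k => ?_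
        rw [tsum_mul_left, (hcsum2 (k + τ)).tsum_eq, mul_one]
    · intro kn
      exact mul_nonneg (sq_nonneg _) (hc_nonneg _ _)
  have hswap : Summable (fun nk : ℕ × ℕ => lam (nk.2 + τ) ^ 2 * c (nk.2 + τ) nk.1) :=
    hF.prod_symm
  have hga_sum : Summable ga :=
    ((summable_prod_of_nonneg
      (fun nk => mul_nonneg (sq_nonneg _) (hc_nonneg _ _))).mp hswap).2
  have hga_nonneg : ∀ n, 0 ≤ ga n :=
    fun n => tsum_nonneg fun k => mul_nonneg (sq_nonneg _) (hc_nonneg _ _)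
  have hga_tsum : ∑' n, ga n = T := by
    have h2 := Summable.tsum_prod hswap
    have h3 := Summable.tsum_prod hF
    have h1 := Equiv.tsum_eq (Equiv.prodComm ℕ ℕ)
      (fun kn : ℕ × ℕ => lam (kn.1 + τ) ^ 2 * c (kn.1 + τ) kn.2)
    simp only [Equiv.prodComm_apply] at h1
    rw [hga_def, hT_def]
    calc (∑' n, ∑' k, lam (k + τ) ^ 2 * c (k + τ) n)
        = ∑' nk : ℕ × ℕ, lam (nk.2 + τ) ^ 2 * c (nk.2 + τ) nk.1 := h2.symm
      _ = ∑' kn : ℕ × ℕ, lam (kn.1 + τ) ^ 2 * c (kn.1 + τ) kn.2 := by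
          rw [← h1]; rfl
      _ = ∑' k, ∑' n, lam (k + τ) ^ 2 * c (k + τ) n := h3
      _ = ∑' k, lam (k + τ) ^ 2 := by
          refine tsum_congr fun k => ?_
          rw [tsum_mul_left, (hcsum2 (k + τ)).tsum_eq, mul_one]
  -- tail of c sums
  have hctail : ∀ n, ∑' k, c (k + τ) n ≤ 1 := by
    intro n
    have hsummable := (hcsum1 n).summable
    have h := Summable.sum_add_tsum_nat_add τ hsummable
    rw [(hcsum1 n).tsum_eq] at h
    have hpart : 0 ≤ ∑ j ∈ Finset.range τ, c j n :=
      Finset.sum_nonneg fun j _ => hc_nonneg j n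
    linarith
  -- splitting a
  have ha_split : ∀ n, a n = al n + ∑' k, t (k + τ) n := by
    intro n
    have hsum : Summable (fun j => t j n) := (hA n).summable
    have h := Summable.sum_add_tsum_nat_add τ hsum
    have htq : (∑' j, t j n) = a n := (hA n).tsum_eq
    rw [htq] at h
    show a n = (∑ j ∈ Finset.range τ, t j n) + ∑' k, t (k + τ) n
    linarith
  have hbeta_le : ∀ n, (∑' k, t (k + τ) n) ≤ ga n + lt n ^ 2 := by
    intro n
    have hsum1 : Summable (fun k => lam (k + τ) ^ 2 * c (k + τ) n) := by
      refine Summable.of_nonneg_of_le (fun k => mul_nonneg (sq_nonneg _) (hc_nonneg _ _))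
        (fun k => ?_) (((summable_nat_add_iff τ).mpr (hcsum1 n).summable).mul_left (lam 0 ^ 2))
      refine mul_le_mul_of_nonneg_right ?_ (hc_nonneg _ _)
      have := hlam_anti (Nat.zero_le (k + τ))
      nlinarith [hlam_nonneg (k + τ)]
    have hsum2 : Summable (fun k => lt n ^ 2 * c (k + τ) n) :=
      ((summable_nat_add_iff τ).mpr (hcsum1 n).summable).mul_left _
    have hterm : ∀ k, t (k + τ) n ≤ lam (k + τ) ^ 2 * c (k + τ) n + lt n ^ 2 * c (k + τ) n := by
      intro k
      show (lam (k + τ) - lt n) ^ 2 * c (k + τ) n ≤ _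
      have h1 : (lam (k + τ) - lt n) ^ 2 ≤ lam (k + τ) ^ 2 + lt n ^ 2 := by
        nlinarith [mul_nonneg (hlam_nonneg (k + τ)) (hlt_nonneg n)]
      nlinarith [hc_nonneg (k + τ) n]
    have hsum0 : Summable (fun j => t j n) := (hA n).summable
    have hLsum : Summable (fun k => t (k + τ) n) :=
      (summable_nat_add_iff τ).mpr hsum0
    calc (∑' k, t (k + τ) n)
        ≤ ∑' k, (lam (k + τ) ^ 2 * c (k + τ) n + lt n ^ 2 * c (k + τ) n) :=
          Summable.tsum_le_tsum hterm hLsum (hsum1.add hsum2)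
      _ = ga n + lt n ^ 2 * ∑' k, c (k + τ) n := by
          rw [Summable.tsum_add hsum1 hsum2, tsum_mul_left, hga_def]
      _ ≤ ga n + lt n ^ 2 := by
          have := hctail n
          nlinarith [sq_nonneg (lt n)]
  have ha_nonneg : ∀ n, 0 ≤ a n := fun n => sq_nonneg _
  have hal_nonneg : ∀ n, 0 ≤ al n := fun n => Finset.sum_nonneg fun j _ => ht_nonneg j n
  have hal_sum : Summable al := by
    refine summable_sum fun j _ => (hD j).summable
  have ha_le : ∀ n, a n ≤ al n + (ga n + lt n ^ 2) := by
    intro n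
    rw [ha_split n]
    have := hbeta_le n
    linarith
  have ha_sum : Summable a :=
    Summable.of_nonneg_of_le ha_nonneg ha_le (hal_sum.add (hga_sum.add hltsq_sum))
  -- main total bound
  have habound : ∀ n, a n ≤ (5 / 2 * B1) ^ 2 := by
    intro n
    rw [ha_def]
    nlinarith [KQ n, norm_nonneg ((S - St) (q n))]
  have hS1 : ∑ n ∈ Finset.range τ, a n ≤ τ * (5 / 2 * B1) ^ 2 := by
    calc ∑ n ∈ Finset.range τ, a n ≤ ∑ _n ∈ Finset.range τ, (5 / 2 * B1) ^ 2 :=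
          Finset.sum_le_sum fun n _ => habound n
      _ = τ * (5 / 2 * B1) ^ 2 := by rw [Finset.sum_const, Finset.card_range, nsmul_eq_mul]
  have hal_tsum : ∑' n, al n ≤ τ * (5 / 2 * B1) ^ 2 := by
    have h1 : ∑' n, al n = ∑ j ∈ Finset.range τ, ∑' n, t j n := by
      rw [hal_def]
      exact Summable.tsum_finsetSum fun j _ => (hD j).summable
    rw [h1]
    calc ∑ j ∈ Finset.range τ, ∑' n, t j n
        ≤ ∑ _j ∈ Finset.range τ, (5 / 2 * B1) ^ 2 := by
          refine Finset.sum_le_sum fun j _ => ?_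
          rw [(hD j).tsum_eq]
          nlinarith [KP j, norm_nonneg ((S - St) (p j))]
      _ = τ * (5 / 2 * B1) ^ 2 := by rw [Finset.sum_const, Finset.card_range, nsmul_eq_mul]
  have hal_shift : ∑' m, al (m + τ) ≤ τ * (5 / 2 * B1) ^ 2 := by
    have h := Summable.sum_add_tsum_nat_add τ hal_sum
    have hpart : 0 ≤ ∑ n ∈ Finset.range τ, al n :=
      Finset.sum_nonneg fun n _ => hal_nonneg n
    linarith
  have hga_shift : ∑' m, ga (m + τ) ≤ T := by
    have h := Summable.sum_add_tsum_nat_add τ hga_sum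
    rw [hga_tsum] at h
    have hpart : 0 ≤ ∑ n ∈ Finset.range τ, ga n :=
      Finset.sum_nonneg fun n _ => hga_nonneg n
    linarith
  have hlt_shift : ∑' m, lt (m + τ) ^ 2 ≤ T := by
    rw [hT_def]
    refine Summable.tsum_le_tsum (fun m => ?_) ((summable_nat_add_iff τ).mpr hltsq_sum)
      ((summable_nat_add_iff τ).mpr hlamsq)
    nlinarith [hlt_nonneg (m + τ), hlt_le_lam (m + τ)]
  have hT_nonneg : 0 ≤ T :=
    tsum_nonneg fun k => sq_nonneg _
  have htail : ∑' m, a (m + τ) ≤ τ * (5 / 2 * B1) ^ 2 + 2 * T := by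
    have hs_al : Summable (fun m => al (m + τ)) := (summable_nat_add_iff τ).mpr hal_sum
    have hs_ga : Summable (fun m => ga (m + τ)) := (summable_nat_add_iff τ).mpr hga_sum
    have hs_lt : Summable (fun m => lt (m + τ) ^ 2) := (summable_nat_add_iff τ).mpr hltsq_sum
    calc ∑' m, a (m + τ)
        ≤ ∑' m, (al (m + τ) + (ga (m + τ) + lt (m + τ) ^ 2)) := by
          refine Summable.tsum_le_tsum (fun m => ha_le (m + τ)) ((summable_nat_add_iff τ).mpr ha_sum)
            (hs_al.add (hs_ga.add hs_lt))
      _ = (∑' m, al (m + τ)) + ((∑' m, ga (m + τ)) + ∑' m, lt (m + τ) ^ 2) := by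
          rw [Summable.tsum_add hs_al (hs_ga.add hs_lt), Summable.tsum_add hs_ga hs_lt]
      _ ≤ τ * (5 / 2 * B1) ^ 2 + 2 * T := by
          have := hal_shift; have := hga_shift; have := hlt_shift
          linarith
  have htot : ∑' n, a n ≤ 13 * τ * B1 ^ 2 + 2 * T := by
    have h := Summable.sum_add_tsum_nat_add τ ha_sum
    have hτ0 : (0 : ℝ) ≤ (τ : ℝ) := Nat.cast_nonneg τ
    nlinarith [hS1, htail, mul_nonneg hτ0 (sq_nonneg B1)]
  -- tail index normalization
  have hTgoal : (∑' i : ℕ, lam (τ + i) ^ 2) = T := by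
    rw [hT_def]
    exact tsum_congr fun i => by rw [add_comm]
  constructor
  · -- part 1
    have hfa_le : ∀ n, ‖(fS - fSt) (q n)‖ ^ 2 ≤ L⁻¹ ^ 2 * a n := by
      intro n
      refine hasSum_le (fun j => ?_) (hFA n) ((hA n).mul_left (L⁻¹ ^ 2))
      have hkey : (f (lam j) - f (lt n)) ^ 2 ≤ L⁻¹ ^ 2 * (lam j - lt n) ^ 2 := by
        have h3 : |f (lam j) - f (lt n)| ^ 2 ≤ (L⁻¹ * |lam j - lt n|) ^ 2 :=
          pow_le_pow_left₀ (abs_nonneg _) (hf (lam j) (lt n)) 2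
        calc (f (lam j) - f (lt n)) ^ 2 = |f (lam j) - f (lt n)| ^ 2 := (sq_abs _).symm
          _ ≤ (L⁻¹ * |lam j - lt n|) ^ 2 := h3
          _ = L⁻¹ ^ 2 * (lam j - lt n) ^ 2 := by rw [mul_pow, sq_abs]
      calc (f (lam j) - f (lt n)) ^ 2 * c j n
          ≤ (L⁻¹ ^ 2 * (lam j - lt n) ^ 2) * c j n :=
            mul_le_mul_of_nonneg_right hkey (hc_nonneg j n)
        _ = L⁻¹ ^ 2 * ((lam j - lt n) ^ 2 * c j n) := by ring
    have hfa_sum : Summable (fun n => ‖(fS - fSt) (q n)‖ ^ 2) :=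
      Summable.of_nonneg_of_le (fun n => sq_nonneg _) hfa_le (ha_sum.mul_left _)
    have h1 : (∑' n, ‖(fS - fSt) (q n)‖ ^ 2) ≤ L⁻¹ ^ 2 * ∑' n, a n := by
      rw [← tsum_mul_left]
      exact Summable.tsum_le_tsum hfa_le hfa_sum (ha_sum.mul_left _)
    calc Real.sqrt (∑' n, ‖(fS - fSt) (q n)‖ ^ 2)
        ≤ Real.sqrt (L⁻¹ ^ 2 * ∑' n, a n) := Real.sqrt_le_sqrt h1
      _ = L⁻¹ * Real.sqrt (∑' n, a n) := by
          rw [Real.sqrt_mul (sq_nonneg _), Real.sqrt_sq hLinv]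
  · -- part 2
    refine mul_le_mul_of_nonneg_left ?_ hLinv
    apply Real.sqrt_le_sqrt
    rw [hTgoal]
    exact htot
end

section
/- Let B : [0,∞) → [0,∞) be nondecreasing with B(t+a) ≤ B(t) + a/2 for all t, a ≥ 0 and B(λ_1) > 0. Assume ‖Σ − Σ̂‖_∞ ≤ B(λ_1) and, for all i ≥ 1, |λ_i − λ̂_i| ≤ B(λ_i) and |λ_i − λ̂_i| ≤ B(λ̂_i). Let Σ̃ be the operator with the same eigenvectors q_i as Σ̂ and eigenvalues λ̃_i = max(λ̂_i − B(λ̂_i), 0). Then for every 1/L-Lipschitz function f : ℝ → ℝ, ‖f(Σ) − f(Σ̃)‖_HS ≤ L^{-1} √( 11 Tr(Σ) B(λ_1) + 13 B(λ_1)² ). -/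
/-!
Write `wₙᵢ = ⟪q n, p i⟫²` and `λ̃ₙ = max (λ̂ₙ - B λ̂ₙ) 0`. Expanding in the basis `p`,
`‖(f(Σ) - f(Σ̃)) (q n)‖² = ∑ᵢ (f λᵢ - f λ̃ₙ)² wₙᵢ`, and since `0 ≤ λ̂ₙ - λ̃ₙ ≤ c := 3/2 · B(λ₁)`,
`(λᵢ - λ̃ₙ)² ≤ (λᵢ + λ̃ₙ) (|λᵢ - λ̂ₙ| + c)`. The kernel `|λᵢ - λ̂ₙ| wₙᵢ` has row and column sums at
most `‖Σ - Σ̂‖ ≤ B(λ₁)`: by Cauchy–Schwarz they are bounded by `‖(Σ - Σ̂) (q n)‖` and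
`‖(Σ - Σ̂) (p i)‖`. A Schur test then bounds the squared Hilbert–Schmidt norm by
`L⁻² (B(λ₁) + c) (Tr Σ + ∑ λ̃ₙ) ≤ 5 L⁻² Tr(Σ) B(λ₁)`, as `λ̃ₙ ≤ λₙ`.
-/

open scoped RealInnerProductSpace

theorem sq_sub_le_add_mul_abs_sub_add {x y z c : ℝ} (hx : 0 ≤ x) (hy : 0 ≤ y)
    (hyz : |z - y| ≤ c) : (x - y) ^ 2 ≤ (x + y) * (|x - z| + c) := by
  have hxy : |x - y| ≤ x + y := abs_sub_le_of_nonneg_of_le hx (by linarith) hy (by linarith)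
  have hxz : |x - y| ≤ |x - z| + c := (abs_sub_le x z y).trans (by gcongr)
  calc (x - y) ^ 2 = |x - y| * |x - y| := by rw [abs_mul_abs_self, sq]
    _ ≤ (x + y) * (|x - z| + c) := mul_le_mul hxy hxz (abs_nonneg _) (by linarith)

theorem Finset.sum_abs_mul_sq_le {ι : Type*} (s : Finset ι) {d a : ι → ℝ} {M : ℝ} (hM : 0 ≤ M)
    (hda : ∑ i ∈ s, d i ^ 2 * a i ^ 2 ≤ M ^ 2) (ha : ∑ i ∈ s, a i ^ 2 ≤ 1) :
    ∑ i ∈ s, |d i| * a i ^ 2 ≤ M := by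
  have hcs := s.sum_mul_sq_le_sq_mul_sq (fun i => |d i| * a i) a
  simp only [mul_pow, sq_abs, mul_assoc, ← sq] at hcs
  refine le_of_pow_le_pow_left₀ two_ne_zero hM (hcs.trans ?_)
  calc (∑ i ∈ s, d i ^ 2 * a i ^ 2) * ∑ i ∈ s, a i ^ 2 ≤ M ^ 2 * 1 :=
        mul_le_mul hda ha (s.sum_nonneg fun i _ => sq_nonneg _) (sq_nonneg M)
    _ = M ^ 2 := mul_one _

theorem Finset.sum_sum_add_mul_le {ι κ : Type*} (s : Finset κ) (t : Finset ι) {a : ι → ℝ}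
    {b : κ → ℝ} {k : κ → ι → ℝ} {M : ℝ} (ha : ∀ i ∈ t, 0 ≤ a i) (hb : ∀ n ∈ s, 0 ≤ b n)
    (hrow : ∀ i ∈ t, ∑ n ∈ s, k n i ≤ M) (hcol : ∀ n ∈ s, ∑ i ∈ t, k n i ≤ M) :
    ∑ n ∈ s, ∑ i ∈ t, (a i + b n) * k n i ≤ M * (∑ i ∈ t, a i + ∑ n ∈ s, b n) := by
  have hrow' : ∑ i ∈ t, ∑ n ∈ s, a i * k n i ≤ ∑ i ∈ t, a i * M :=
    Finset.sum_le_sum fun i hi => by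
      rw [← Finset.mul_sum]; exact mul_le_mul_of_nonneg_left (hrow i hi) (ha i hi)
  have hcol' : ∑ n ∈ s, ∑ i ∈ t, b n * k n i ≤ ∑ n ∈ s, b n * M :=
    Finset.sum_le_sum fun n hn => by
      rw [← Finset.mul_sum]; exact mul_le_mul_of_nonneg_left (hcol n hn) (hb n hn)
  simp only [add_mul, Finset.sum_add_distrib]
  rw [Finset.sum_comm, mul_add, Finset.mul_sum, Finset.mul_sum]
  simp only [mul_comm M]
  exact add_le_add hrow' hcol'

theorem tsum_le_of_sum_sum_le {ι κ : Type*} {g : κ → ι → ℝ} {F : κ → ℝ} {C : ℝ}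
    (hF : ∀ n, HasSum (g n) (F n)) (hC : 0 ≤ C)
    (h : ∀ s t, ∑ n ∈ s, ∑ i ∈ t, g n i ≤ C) : ∑' n, F n ≤ C := by
  refine tsum_le_of_sum_le' hC fun s => ?_
  rw [← (hasSum_sum fun n _ => hF n).tsum_eq]
  refine tsum_le_of_sum_le' hC fun t => ?_
  rw [Finset.sum_comm]
  exact h s t

namespace HilbertBasis

variable {ι H : Type*} [NormedAddCommGroup H] [InnerProductSpace ℝ H] (e : HilbertBasis ι ℝ H)

theorem hasSum_inner_sq_s8 (x : H) : HasSum (fun i => ⟪x, e i⟫ ^ 2) (‖x‖ ^ 2) := by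
  simpa only [real_inner_comm x, ← sq, real_inner_self_eq_norm_sq] using
    e.hasSum_inner_mul_inner x x

theorem tsum_mul_inner_smul_self (a : ι → ℝ) (n : ι) :
    ∑' i, (a i * ⟪e n, e i⟫) • e i = a n • e n := by
  rw [tsum_eq_single n fun i hi => by rw [e.orthonormal.2 (Ne.symm hi), mul_zero, zero_smul],
    real_inner_self_eq_norm_sq, e.orthonormal.1 n, one_pow, mul_one]

variable {e} {A : H →L[ℝ] H} {a : ι → ℝ}

/-- Continuity of `A` replaces any bound on the eigenvalues `a`. -/
theorem inner_apply_eq_mul_inner (hA : ∀ i, A (e i) = a i • e i) (u : H) (k : ι) :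
    ⟪A u, e k⟫ = a k * ⟪u, e k⟫ := by
  have hdense : Dense (Submodule.span ℝ (Set.range e) : Set H) :=
    Submodule.dense_iff_topologicalClosure_eq_top.2 e.dense_span
  have hext : (innerSL ℝ (e k)).comp A = a k • innerSL ℝ (e k) := by
    refine ContinuousLinearMap.ext_on hdense ?_
    rintro _ ⟨i, rfl⟩
    by_cases hik : i = k
    · subst hik; simp [hA]
    · simp [hA, e.orthonormal.2 (Ne.symm hik)]
  simpa [real_inner_comm] using congrArg (fun T : H →L[ℝ] ℝ => T u) hext

theorem hasSum_sq_mul_inner_sq (hA : ∀ i, A (e i) = a i • e i) (v : H) (x : ℝ) :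
    HasSum (fun i => (a i - x) ^ 2 * ⟪v, e i⟫ ^ 2) (‖A v - x • v‖ ^ 2) := by
  convert e.hasSum_inner_sq_s8 (A v - x • v) using 2 with i
  rw [inner_sub_left, inner_apply_eq_mul_inner hA, real_inner_smul_left]
  ring

/-- Cauchy–Schwarz against the second moment `∑ (a i - x)² ⟪v, e i⟫² = ‖A v - x • v‖²`. -/
theorem sum_abs_sub_add_mul_inner_sq_le (hA : ∀ i, A (e i) = a i • e i) {v : H} (hv : ‖v‖ = 1)
    {x β c : ℝ} (hβ : ‖A v - x • v‖ ≤ β) (hc : 0 ≤ c) (s : Finset ι) :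
    ∑ i ∈ s, (|a i - x| + c) * ⟪v, e i⟫ ^ 2 ≤ β + c := by
  have hβ0 : 0 ≤ β := (norm_nonneg _).trans hβ
  have hv1 : ∑ i ∈ s, ⟪v, e i⟫ ^ 2 ≤ 1 := by
    simpa [hv] using sum_le_hasSum s (fun i _ => sq_nonneg _) (e.hasSum_inner_sq_s8 v)
  have hmoment : ∑ i ∈ s, |a i - x| * ⟪v, e i⟫ ^ 2 ≤ β :=
    s.sum_abs_mul_sq_le hβ0
      ((sum_le_hasSum s (fun i _ => by positivity) (hasSum_sq_mul_inner_sq hA v x)).trans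
        (pow_le_pow_left₀ (norm_nonneg _) hβ 2)) hv1
  simp only [add_mul, Finset.sum_add_distrib, ← Finset.mul_sum]
  nlinarith

end HilbertBasis

section SpectralPerturbation

variable {ι κ H : Type*} [NormedAddCommGroup H] [InnerProductSpace ℝ H]

theorem tsum_norm_sq_sub_apply_le (p : HilbertBasis ι ℝ H) (q : HilbertBasis κ ℝ H)
    {S Sh fS fM : H →L[ℝ] H} {lam : ι → ℝ} {lamh mu : κ → ℝ} {f : ℝ → ℝ} {K β c : ℝ}
    (hS : ∀ i, S (p i) = lam i • p i) (hSh : ∀ n, Sh (q n) = lamh n • q n)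
    (hfS : ∀ i, fS (p i) = f (lam i) • p i) (hfM : ∀ n, fM (q n) = f (mu n) • q n)
    (hnorm : ‖S - Sh‖ ≤ β) (hc : ∀ n, |lamh n - mu n| ≤ c) (hc0 : 0 ≤ c)
    (hlam_nonneg : ∀ i, 0 ≤ lam i) (hlam_sum : Summable lam)
    (hmu_nonneg : ∀ n, 0 ≤ mu n) (hmu_sum : Summable mu)
    (hf : ∀ s t, |f s - f t| ≤ K * |s - t|) :
    ∑' n, ‖(fS - fM) (q n)‖ ^ 2 ≤ K ^ 2 * ((β + c) * (∑' i, lam i + ∑' n, mu n)) := by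
  have hβ : 0 ≤ β := (norm_nonneg _).trans hnorm
  have hrow : ∀ i (s : Finset κ), ∑ n ∈ s, (|lam i - lamh n| + c) * ⟪q n, p i⟫ ^ 2 ≤ β + c := by
    intro i s
    have hSp : ‖Sh (p i) - lam i • p i‖ ≤ β := by
      rw [← hS i, ← norm_neg, neg_sub, ← sub_apply]
      exact ((S - Sh).unit_le_opNorm _ (p.orthonormal.1 i).le).trans hnorm
    simpa only [abs_sub_comm, real_inner_comm] using
      q.sum_abs_sub_add_mul_inner_sq_le hSh (p.orthonormal.1 i) hSp hc0 s
  have hcol : ∀ n (t : Finset ι), ∑ i ∈ t, (|lam i - lamh n| + c) * ⟪q n, p i⟫ ^ 2 ≤ β + c := by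
    intro n t
    have hSq : ‖S (q n) - lamh n • q n‖ ≤ β := by
      rw [← hSh n, ← sub_apply]
      exact ((S - Sh).unit_le_opNorm _ (q.orthonormal.1 n).le).trans hnorm
    exact p.sum_abs_sub_add_mul_inner_sq_le hS (q.orthonormal.1 n) hSq hc0 t
  have hpoint : ∀ n i, (f (lam i) - f (mu n)) ^ 2 * ⟪q n, p i⟫ ^ 2 ≤
      K ^ 2 * ((lam i + mu n) * ((|lam i - lamh n| + c) * ⟪q n, p i⟫ ^ 2)) := by
    intro n i
    have hlip : (f (lam i) - f (mu n)) ^ 2 ≤ K ^ 2 * (lam i - mu n) ^ 2 := by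
      rw [← sq_abs, ← sq_abs (lam i - mu n), ← mul_pow]
      exact pow_le_pow_left₀ (abs_nonneg _) (hf _ _) 2
    have hsq := sq_sub_le_add_mul_abs_sub_add (hlam_nonneg i) (hmu_nonneg n) (hc n)
    calc (f (lam i) - f (mu n)) ^ 2 * ⟪q n, p i⟫ ^ 2
        ≤ K ^ 2 * ((lam i + mu n) * (|lam i - lamh n| + c)) * ⟪q n, p i⟫ ^ 2 := by
          gcongr; exact hlip.trans (by gcongr)
      _ = _ := by ring
  have hsplit : ∀ n, (fS - fM) (q n) = fS (q n) - f (mu n) • q n := fun n => by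
    rw [sub_apply, hfM]
  refine tsum_le_of_sum_sum_le (fun n => hsplit n ▸ p.hasSum_sq_mul_inner_sq hfS (q n) (f (mu n)))
    (mul_nonneg (sq_nonneg K) (mul_nonneg (by linarith)
      (add_nonneg (tsum_nonneg hlam_nonneg) (tsum_nonneg hmu_nonneg))))
    fun s t => ?_
  calc ∑ n ∈ s, ∑ i ∈ t, (f (lam i) - f (mu n)) ^ 2 * ⟪q n, p i⟫ ^ 2
      ≤ ∑ n ∈ s, ∑ i ∈ t, K ^ 2 * ((lam i + mu n) * ((|lam i - lamh n| + c) * ⟪q n, p i⟫ ^ 2)) :=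
        Finset.sum_le_sum fun n _ => Finset.sum_le_sum fun i _ => hpoint n i
    _ = K ^ 2 * ∑ n ∈ s, ∑ i ∈ t, (lam i + mu n) * ((|lam i - lamh n| + c) * ⟪q n, p i⟫ ^ 2) := by
        simp only [Finset.mul_sum]
    _ ≤ K ^ 2 * ((β + c) * (∑ i ∈ t, lam i + ∑ n ∈ s, mu n)) := by
        gcongr
        exact Finset.sum_sum_add_mul_le s t (fun i _ => hlam_nonneg i) (fun n _ => hmu_nonneg n)
          (fun i _ => hrow i s) (fun n _ => hcol n t)
    _ ≤ K ^ 2 * ((β + c) * (∑' i, lam i + ∑' n, mu n)) := by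
        gcongr
        · exact hlam_sum.sum_le_tsum t fun i _ => hlam_nonneg i
        · exact hmu_sum.sum_le_tsum s fun n _ => hmu_nonneg n

end SpectralPerturbation

theorem max_sub_zero_le_of_abs_sub_le {s t b : ℝ} (hs : 0 ≤ s) (hst : |s - t| ≤ b) :
    max (t - b) 0 ≤ s :=
  max_le (by linarith [(abs_le.1 hst).1]) hs

theorem abs_sub_max_sub_zero_le {t b : ℝ} (ht : 0 ≤ t) (hb : 0 ≤ b) :
    |t - max (t - b) 0| ≤ b := by
  rcases le_total (t - b) 0 with h | h
  · rw [max_eq_right h, sub_zero, abs_of_nonneg ht]; linarith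
  · rw [max_eq_left h, sub_sub_cancel, abs_of_nonneg hb]

theorem le_three_halves_mul_of_abs_sub_le {B : ℝ → ℝ}
    (hB_mono : ∀ s t, 0 ≤ s → s ≤ t → B s ≤ B t)
    (hB_half : ∀ t a, 0 ≤ t → 0 ≤ a → B (t + a) ≤ B t + a / 2)
    {s t : ℝ} (hs : 0 ≤ s) (ht : 0 ≤ t) (hBs : 0 ≤ B s) (hst : |s - t| ≤ B s) :
    B t ≤ 3 / 2 * B s := by
  calc B t ≤ B (s + B s) := hB_mono t _ ht (by linarith [(abs_le.1 hst).1])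
    _ ≤ B s + B s / 2 := hB_half s _ hs hBs
    _ = 3 / 2 * B s := by ring

theorem robust_pca_smooth_cutoff_hs_worst_case_bound_general
    {H : Type*} [NormedAddCommGroup H] [InnerProductSpace ℝ H]
    (p q : HilbertBasis ℕ ℝ H)
    (lam lamh : ℕ → ℝ)
    (hlam_nonneg : ∀ i, 0 ≤ lam i)
    (hlam_sum : Summable lam)
    (hlamh_anti : Antitone lamh) (hlamh_nonneg : ∀ i, 0 ≤ lamh i)
    (S Sh : H →L[ℝ] H)
    (hS : ∀ u, S u = ∑' i, (lam i * ⟪u, p i⟫) • p i)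
    (hSh : ∀ u, Sh u = ∑' i, (lamh i * ⟪u, q i⟫) • q i)
    (B : ℝ → ℝ)
    (hB_nonneg : ∀ t, 0 ≤ t → 0 ≤ B t)
    (hB_mono : ∀ s t, 0 ≤ s → s ≤ t → B s ≤ B t)
    (hB_half : ∀ t a, 0 ≤ t → 0 ≤ a → B (t + a) ≤ B t + a / 2)
    (hnorm : ‖S - Sh‖ ≤ B (lam 0))
    (heig : ∀ i : ℕ, |lam i - lamh i| ≤ B (lam i) ∧ |lam i - lamh i| ≤ B (lamh i))
    (L : ℝ) (hL : 0 < L)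
    (f : ℝ → ℝ) (hf : ∀ s t : ℝ, |f s - f t| ≤ L⁻¹ * |s - t|)
    (fS fSt : H →L[ℝ] H)
    (hfS : ∀ u, fS u = ∑' i, (f (lam i) * ⟪u, p i⟫) • p i)
    (hfSt : ∀ u, fSt u = ∑' i, (f (max (lamh i - B (lamh i)) 0) * ⟪u, q i⟫) • q i)
    :
    Real.sqrt (∑' n : ℕ, ‖(fS - fSt) (q n)‖ ^ 2) ≤
      L⁻¹ * Real.sqrt (11 * (∑' i : ℕ, lam i) * B (lam 0) + 13 * B (lam 0) ^ 2) := by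
  set B₁ := B (lam 0)
  set lamt : ℕ → ℝ := fun n => max (lamh n - B (lamh n)) 0
  have hB₁ : 0 ≤ B₁ := hB_nonneg _ (hlam_nonneg 0)
  have hlamt_le : ∀ n, lamt n ≤ lam n := fun n =>
    max_sub_zero_le_of_abs_sub_le (hlam_nonneg n) (heig n).2
  have hshrink : ∀ n, |lamh n - lamt n| ≤ 3 / 2 * B₁ := fun n =>
    (abs_sub_max_sub_zero_le (hlamh_nonneg n) (hB_nonneg _ (hlamh_nonneg n))).trans <|
      (hB_mono _ _ (hlamh_nonneg n) (hlamh_anti n.zero_le)).trans <|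
        le_three_halves_mul_of_abs_sub_le hB_mono hB_half (hlam_nonneg 0) (hlamh_nonneg 0) hB₁
          (heig 0).1
  have hlamt_sum : Summable lamt :=
    hlam_sum.of_nonneg_of_le (fun n => le_max_right _ _) hlamt_le
  have hHS := tsum_norm_sq_sub_apply_le p q
    (fun i => (hS _).trans (p.tsum_mul_inner_smul_self lam i))
    (fun n => (hSh _).trans (q.tsum_mul_inner_smul_self lamh n))
    (fun i => (hfS _).trans (p.tsum_mul_inner_smul_self (fun j => f (lam j)) i))
    (fun n => (hfSt _).trans (q.tsum_mul_inner_smul_self (fun j => f (lamt j)) n))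
    hnorm hshrink (by positivity) hlam_nonneg hlam_sum (fun n => le_max_right _ _) hlamt_sum hf
  have htr : ∑' n, lamt n ≤ ∑' i, lam i := hlamt_sum.tsum_le_tsum hlamt_le hlam_sum
  have hTr : 0 ≤ ∑' i, lam i := tsum_nonneg hlam_nonneg
  have hbound : ∑' n, ‖(fS - fSt) (q n)‖ ^ 2 ≤
      L⁻¹ ^ 2 * (11 * (∑' i, lam i) * B₁ + 13 * B₁ ^ 2) := by
    refine hHS.trans (mul_le_mul_of_nonneg_left ?_ (sq_nonneg _))
    nlinarith
  calc Real.sqrt (∑' n, ‖(fS - fSt) (q n)‖ ^ 2)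
      ≤ Real.sqrt (L⁻¹ ^ 2 * (11 * (∑' i, lam i) * B₁ + 13 * B₁ ^ 2)) := Real.sqrt_le_sqrt hbound
    _ = L⁻¹ * Real.sqrt (11 * (∑' i, lam i) * B₁ + 13 * B₁ ^ 2) := by
        rw [Real.sqrt_mul (sq_nonneg _), Real.sqrt_sq (inv_nonneg.2 hL.le)]

/-- Frobenius-norm bound for the smooth spectral cut-off applied to the shrunk estimator
`Σ̃` (same eigenvectors `q_i` as `Σ̂`, eigenvalues `λ̃_i = max(λ̂_i - B(λ̂_i), 0)`):
assuming `B(λ_1) > 0`: for every `1/L`-Lipschitz `f`,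
`‖f(Σ) - f(Σ̃)‖_HS ≤ L⁻¹ √(11 Tr(Σ) B(λ_1) + 13 B(λ_1)²)`.
Here the Hilbert–Schmidt norm of an operator `T` is expressed through the orthonormal
basis `q` as `√(∑' n, ‖T (q n)‖²)` and `λ_1 = lam 0`. -/
theorem robust_pca_smooth_cutoff_hs_worst_case_bound
    {H : Type*} [NormedAddCommGroup H] [InnerProductSpace ℝ H] [CompleteSpace H]
    (p q : HilbertBasis ℕ ℝ H)
    (lam lamh : ℕ → ℝ)
    (hlam_anti : Antitone lam) (hlam_nonneg : ∀ i, 0 ≤ lam i)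
    (hlam_sum : Summable lam)
    (hlamh_anti : Antitone lamh) (hlamh_nonneg : ∀ i, 0 ≤ lamh i)
    (hlamh_sum : Summable lamh)
    (S Sh : H →L[ℝ] H)
    (hS : ∀ u, S u = ∑' i, (lam i * ⟪u, p i⟫) • p i)
    (hSh : ∀ u, Sh u = ∑' i, (lamh i * ⟪u, q i⟫) • q i)
    (B : ℝ → ℝ)
    (hB_nonneg : ∀ t, 0 ≤ t → 0 ≤ B t)
    (hB_mono : ∀ s t, 0 ≤ s → s ≤ t → B s ≤ B t)
    (hB_half : ∀ t a, 0 ≤ t → 0 ≤ a → B (t + a) ≤ B t + a / 2)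
    (hBpos : 0 < B (lam 0))
    (hnorm : ‖S - Sh‖ ≤ B (lam 0))
    (heig : ∀ i : ℕ, |lam i - lamh i| ≤ B (lam i) ∧ |lam i - lamh i| ≤ B (lamh i))
    (St : H →L[ℝ] H)
    (hSt : ∀ u, St u = ∑' i, (max (lamh i - B (lamh i)) 0 * ⟪u, q i⟫) • q i)
    (L : ℝ) (hL : 0 < L)
    (f : ℝ → ℝ) (hf : ∀ s t : ℝ, |f s - f t| ≤ L⁻¹ * |s - t|)
    (fS fSt : H →L[ℝ] H)
    (hfS : ∀ u, fS u = ∑' i, (f (lam i) * ⟪u, p i⟫) • p i)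
    (hfSt : ∀ u, fSt u = ∑' i, (f (max (lamh i - B (lamh i)) 0) * ⟪u, q i⟫) • q i)
    :
    Real.sqrt (∑' n : ℕ, ‖(fS - fSt) (q n)‖ ^ 2) ≤
      L⁻¹ * Real.sqrt (11 * (∑' i : ℕ, lam i) * B (lam 0) + 13 * B (lam 0) ^ 2) :=
  robust_pca_smooth_cutoff_hs_worst_case_bound_general p q lam lamh hlam_nonneg hlam_sum hlamh_anti
    hlamh_nonneg S Sh hS hSh B hB_nonneg hB_mono hB_half hnorm heig L hL f hf fS fSt hfS hfSt
end

section
/- For the Hilbert–Schmidt operators M and M' one has ‖M − M'‖_HS² = Σ_{i,k≥1} (μ_i − μ'_k)² ⟨p_i, q_k⟩². -/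
open scoped RealInnerProductSpace

/-- For self-adjoint Hilbert–Schmidt operators `M`, `M'` with spectral decompositions
`Mu = Σ_i μ_i ⟨u,p_i⟩ p_i` and `M'u = Σ_i μ'_i ⟨u,q_i⟩ q_i`, one has
`‖M - M'‖_HS² = Σ_{i,k} (μ_i - μ'_k)² ⟨p_i, q_k⟩²`.
Here the squared Hilbert–Schmidt norm is expressed through the orthonormal basis `q` as
`∑' n, ‖(M - M') (q n)‖²`. -/
theorem hs_norm_sq_of_two_spectral_decompositions
    {H : Type*} [NormedAddCommGroup H] [InnerProductSpace ℝ H] [CompleteSpace H]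
    (p q : HilbertBasis ℕ ℝ H)
    (mu mu' : ℕ → ℝ)
    (hmu_sq : Summable fun i => mu i ^ 2)
    (hmu'_sq : Summable fun i => mu' i ^ 2)
    (M M' : H →L[ℝ] H)
    (hM : ∀ u, M u = ∑' i, (mu i * ⟪u, p i⟫) • p i)
    (hM' : ∀ u, M' u = ∑' i, (mu' i * ⟪u, q i⟫) • q i) :
    (∑' n : ℕ, ‖(M - M') (q n)‖ ^ 2) =
      ∑' ik : ℕ × ℕ, (mu ik.1 - mu' ik.2) ^ 2 * ⟪p ik.1, q ik.2⟫ ^ 2 := by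
  set f : ℕ → ℕ → ℝ := fun i n => (mu i - mu' n) ^ 2 * ⟪p i, q n⟫ ^ 2 with hf
  have hpq_ite : ∀ i j, ⟪p i, p j⟫ = if i = j then 1 else 0 :=
    fun i j => orthonormal_iff_ite.mp p.orthonormal i j
  have hq_ite : ∀ i j, ⟪q i, q j⟫ = if i = j then 1 else 0 :=
    fun i j => orthonormal_iff_ite.mp q.orthonormal i j
  -- squared inner products of a fixed vector against a Hilbert basis
  have hsq_p : ∀ x : H, HasSum (fun i => ⟪p i, x⟫ ^ 2) ⟪x, x⟫ := by
    intro x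
    have := p.hasSum_inner_mul_inner x x
    refine this.congr_fun fun i => ?_
    rw [real_inner_comm x (p i), sq]
  have hsq_q : ∀ x : H, HasSum (fun n => ⟪x, q n⟫ ^ 2) ⟪x, x⟫ := by
    intro x
    have := q.hasSum_inner_mul_inner x x
    refine this.congr_fun fun n => ?_
    rw [real_inner_comm (q n) x, sq]
  -- M' (q n) = mu' n • q n
  have hM'qn : ∀ n, M' (q n) = mu' n • q n := by
    intro n
    rw [hM' (q n)]
    rw [tsum_eq_single n]
    · rw [hq_ite, if_pos rfl, mul_one]
    · intro j hj
      rw [hq_ite, if_neg (Ne.symm hj), mul_zero, zero_smul]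
  -- the series for M (q n) genuinely converges
  have hMqn : ∀ n, HasSum (fun i => (mu i * ⟪q n, p i⟫) • p i) (M (q n)) := by
    intro n
    have hsum : Summable fun i => (mu i * ⟪q n, p i⟫) • p i := by
      refine Summable.of_norm ?_
      have hb : Summable fun i => (mu i ^ 2 + ⟪q n, p i⟫ ^ 2) / 2 := by
        have h1 : Summable fun i => ⟪q n, p i⟫ ^ 2 := by
          have := hsq_p (q n)
          exact (this.congr_fun fun i => by rw [real_inner_comm]).summable
        exact (hmu_sq.add h1).div_const 2
      refine Summable.of_nonneg_of_le (fun i => norm_nonneg _) (fun i => ?_) hb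
      have h2 : ‖p i‖ = 1 := p.orthonormal.1 i
      rw [norm_smul, h2, mul_one]
      have := abs_mul (mu i) ⟪q n, p i⟫
      rw [Real.norm_eq_abs, this]
      nlinarith [sq_nonneg (|mu i| - |⟪q n, p i⟫|), sq_abs (mu i),
        sq_abs ⟪q n, p i⟫, abs_nonneg (mu i), abs_nonneg ⟪q n, p i⟫]
    rw [hM (q n)]
    exact hsum.hasSum
  -- the key coefficient computation
  have hcoef : ∀ n i, ⟪p i, (M - M') (q n)⟫ = (mu i - mu' n) * ⟪p i, q n⟫ := by
    intro n i
    have hMc : ⟪p i, M (q n)⟫ = mu i * ⟪p i, q n⟫ := by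
      have h2 := (hMqn n).mapL (innerSL ℝ (p i))
      simp only [innerSL_apply_apply] at h2
      rw [h2.tsum_eq.symm, tsum_eq_single i]
      · rw [real_inner_smul_right, hpq_ite, if_pos rfl, mul_one, real_inner_comm]
      · intro j hj
        rw [real_inner_smul_right, hpq_ite, if_neg (Ne.symm hj), mul_zero]
    have : (M - M') (q n) = M (q n) - M' (q n) := rfl
    rw [this, inner_sub_right, hMc, hM'qn n, real_inner_smul_right]
    ring
  -- Parseval for each n
  have hA : ∀ n, HasSum (fun i => f i n) (‖(M - M') (q n)‖ ^ 2) := by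
    intro n
    have h1 := hsq_p ((M - M') (q n))
    rw [real_inner_self_eq_norm_sq] at h1
    refine h1.congr_fun fun i => ?_
    rw [hcoef n i, mul_pow]
  -- summability on the product
  have hg1 : Summable fun ik : ℕ × ℕ => mu ik.1 ^ 2 * ⟪p ik.1, q ik.2⟫ ^ 2 := by
    refine (summable_prod_of_nonneg
        (fun ik => mul_nonneg (sq_nonneg _) (sq_nonneg _))).2 ⟨?_, ?_⟩
    · intro i
      show Summable fun n => mu i ^ 2 * ⟪p i, q n⟫ ^ 2
      exact ((hsq_q (p i)).summable).mul_left _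
    · refine hmu_sq.congr fun i => ?_
      show mu i ^ 2 = ∑' n, mu i ^ 2 * ⟪p i, q n⟫ ^ 2
      symm
      rw [tsum_mul_left, (hsq_q (p i)).tsum_eq, hpq_ite, if_pos rfl, mul_one]
  have hg2' : Summable fun ni : ℕ × ℕ => mu' ni.1 ^ 2 * ⟪p ni.2, q ni.1⟫ ^ 2 := by
    refine (summable_prod_of_nonneg
        (fun ik => mul_nonneg (sq_nonneg _) (sq_nonneg _))).2 ⟨?_, ?_⟩
    · intro n
      show Summable fun i => mu' n ^ 2 * ⟪p i, q n⟫ ^ 2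
      exact ((hsq_p (q n)).summable).mul_left _
    · refine hmu'_sq.congr fun n => ?_
      show mu' n ^ 2 = ∑' i, mu' n ^ 2 * ⟪p i, q n⟫ ^ 2
      symm
      rw [tsum_mul_left, (hsq_p (q n)).tsum_eq, hq_ite, if_pos rfl, mul_one]
  have hg2 : Summable fun ik : ℕ × ℕ => mu' ik.2 ^ 2 * ⟪p ik.1, q ik.2⟫ ^ 2 := by
    have := (Equiv.prodComm ℕ ℕ).summable_iff.2 hg2'
    exact this
  have hFsum : Summable fun ik : ℕ × ℕ => f ik.1 ik.2 := by
    refine Summable.of_nonneg_of_le (fun ik => mul_nonneg (sq_nonneg _) (sq_nonneg _)) (fun ik => ?_)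
      ((hg1.mul_left 2).add (hg2.mul_left 2))
    have h0 : (0:ℝ) ≤ ⟪p ik.1, q ik.2⟫ ^ 2 := sq_nonneg _
    simp only [hf]
    nlinarith [sq_nonneg (mu ik.1 + mu' ik.2)]
  -- combine
  have hswap : Summable fun ni : ℕ × ℕ => f ni.2 ni.1 := by
    have := (Equiv.prodComm ℕ ℕ).summable_iff.2 hFsum
    exact this
  calc (∑' n : ℕ, ‖(M - M') (q n)‖ ^ 2) = ∑' n, ∑' i, f i n :=
        tsum_congr fun n => (hA n).tsum_eq.symm
    _ = ∑' ni : ℕ × ℕ, f ni.2 ni.1 := (Summable.tsum_prod' hswap fun n => (hA n).summable).symm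
    _ = ∑' ik : ℕ × ℕ, f ik.1 ik.2 :=
        (Equiv.prodComm ℕ ℕ).tsum_eq (fun ik : ℕ × ℕ => f ik.1 ik.2)
end

section
/- Let x be a unit eigenvector of P + Q with eigenvalue λ ∈ (0,1) ∪ (1,2). Then (P−Q)²x = (2−λ)λ x ≠ 0, so (P−Q)x ≠ 0, and (P+Q)(P−Q)x = (2−λ)(P−Q)x, so (P−Q)x is an eigenvector of P + Q with eigenvalue 2−λ. Moreover 0 < ‖Px‖ = ‖Qx‖ < ‖x‖, x − Px ≠ 0, and the pair (Px, x − Px) is an orthogonal basis of span{x, (P−Q)x}. -/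
open scoped RealInnerProductSpace

private lemma aux_sq_lt_one (a lam : ℝ) (ha : 0 ≤ a) (h : a ^ 2 = lam / 2)
    (h2 : lam < 2) : a < 1 := by nlinarith

/-- For orthogonal projectors `P`, `Q` on `ℝ^d` and a unit eigenvector `x` of `P + Q`
with eigenvalue `λ ∈ (0,1) ∪ (1,2)`:
`(P-Q)²x = (2-λ)λ x ≠ 0` (so `(P-Q)x ≠ 0`), `(P+Q)(P-Q)x = (2-λ)(P-Q)x`
(so `(P-Q)x` is an eigenvector of `P+Q` with eigenvalue `2-λ`),
`0 < ‖Px‖ = ‖Qx‖ < ‖x‖`, `x - Px ≠ 0`, and `(Px, x - Px)` is an orthogonal basis of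
`span{x, (P-Q)x}`. -/
theorem proj_sum_eigenvalue_middle
    (d : ℕ) (P Q : EuclideanSpace ℝ (Fin d) →ₗ[ℝ] EuclideanSpace ℝ (Fin d))
    (hPsym : P.IsSymmetric) (hPidem : ∀ x, P (P x) = P x)
    (hQsym : Q.IsSymmetric) (hQidem : ∀ x, Q (Q x) = Q x)
    (lam : ℝ) (hlam : lam ∈ Set.Ioo (0 : ℝ) 1 ∪ Set.Ioo (1 : ℝ) 2)
    (x : EuclideanSpace ℝ (Fin d)) (hx : ‖x‖ = 1)
    (heig : (P + Q) x = lam • x) :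
    (P - Q) ((P - Q) x) = ((2 - lam) * lam) • x ∧
      ((2 - lam) * lam) • x ≠ 0 ∧
      (P - Q) x ≠ 0 ∧
      (P + Q) ((P - Q) x) = (2 - lam) • ((P - Q) x) ∧
      0 < ‖P x‖ ∧ ‖P x‖ = ‖Q x‖ ∧ ‖Q x‖ < ‖x‖ ∧
      x - P x ≠ 0 ∧
      ⟪P x, x - P x⟫ = 0 ∧
      Submodule.span ℝ {P x, x - P x} = Submodule.span ℝ {x, (P - Q) x} := by
  have hx0 : x ≠ 0 := fun h => by simp [h] at hx
  obtain ⟨hl0, hl2, hl1⟩ : 0 < lam ∧ lam < 2 ∧ lam ≠ 1 := by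
    rcases hlam with ⟨h1, h2⟩ | ⟨h1, h2⟩
    · exact ⟨h1, by linarith, ne_of_lt h2⟩
    · exact ⟨by linarith, h2, ne_of_gt h1⟩
  have hPQ : P x + Q x = lam • x := by simpa [LinearMap.add_apply] using heig
  have hQx : Q x = lam • x - P x := by rw [← hPQ]; abel
  have hPx : P x = lam • x - Q x := by rw [← hPQ]; abel
  have hPQx : P (Q x) = (lam - 1) • P x := by
    rw [hQx, map_sub, map_smul, hPidem]; module
  have hQPx : Q (P x) = (lam - 1) • Q x := by
    rw [hPx, map_sub, map_smul, hQidem]; module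
  have eq1 : (P - Q) ((P - Q) x) = ((2 - lam) * lam) • x := by
    have h : (2 - lam) • (P x + Q x) = ((2 - lam) * lam) • x := by
      rw [hPQ, smul_smul]
    simp only [LinearMap.sub_apply, map_sub, hPidem, hQidem, hPQx, hQPx]
    rw [← h]; module
  have hc : ((2 - lam) * lam) • x ≠ 0 :=
    smul_ne_zero (by nlinarith) hx0
  have hpq0 : (P - Q) x ≠ 0 := by
    intro h
    rw [h, map_zero] at eq1
    exact hc eq1.symm
  have eq4 : (P + Q) ((P - Q) x) = (2 - lam) • ((P - Q) x) := by
    simp only [LinearMap.add_apply, LinearMap.sub_apply, map_sub, hPidem, hQidem,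
      hPQx, hQPx]
    module
  -- inner product facts
  have hip : ⟪P x, x⟫ = ⟪P x, P x⟫ := by
    have h := hPsym (P x) x
    rwa [hPidem] at h
  have hiq : ⟪Q x, x⟫ = ⟪Q x, Q x⟫ := by
    have h := hQsym (Q x) x
    rwa [hQidem] at h
  have hsum : ⟪P x, P x⟫ + ⟪Q x, Q x⟫ = lam := by
    have h : ⟪P x + Q x, x⟫ = lam := by
      rw [hPQ, real_inner_smul_left, real_inner_self_eq_norm_sq, hx]
      ring
    rw [inner_add_left, hip, hiq] at h
    exact h
  have hpq_eq : ⟪P x, P x⟫ = ⟪Q x, Q x⟫ := by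
    have h1 : ⟪Q x, P x⟫ = (lam - 1) * ⟪P x, P x⟫ := by
      have h := hPsym (Q x) x
      rw [← h, hPQx, real_inner_smul_left, hip]
    have h2 : ⟪P x, Q x⟫ = (lam - 1) * ⟪Q x, Q x⟫ := by
      have h := hQsym (P x) x
      rw [← h, hQPx, real_inner_smul_left, hiq]
    have h3 := real_inner_comm (Q x) (P x)
    rw [h1, h2] at h3
    exact (mul_left_cancel₀ (sub_ne_zero.mpr hl1) h3).symm
  have hval : ⟪P x, P x⟫ = lam / 2 := by linarith
  have hvalq : ⟪Q x, Q x⟫ = lam / 2 := by linarith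
  have hnp : ‖P x‖ ^ 2 = lam / 2 := by
    rw [← real_inner_self_eq_norm_sq]; exact hval
  have hnq : ‖Q x‖ ^ 2 = lam / 2 := by
    rw [← real_inner_self_eq_norm_sq]; exact hvalq
  have hppos : 0 < ‖P x‖ := by nlinarith [norm_nonneg (P x)]
  have hpeq : ‖P x‖ = ‖Q x‖ := by
    rw [← Real.sqrt_sq (norm_nonneg (P x)), ← Real.sqrt_sq (norm_nonneg (Q x)), hnp, hnq]
  have hqlt : ‖Q x‖ < ‖x‖ := by
    rw [hx]; exact aux_sq_lt_one _ _ (norm_nonneg (Q x)) hnq hl2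
  have horth : ⟪P x, x - P x⟫ = 0 := by
    rw [inner_sub_right, hip, sub_self]
  have hxp0 : x - P x ≠ 0 := by
    intro h
    have h2 : ⟪x - P x, x - P x⟫ = (0 : ℝ) := by rw [h, inner_zero_left]
    rw [inner_sub_sub_self] at h2
    have hxx : ⟪x, x⟫ = (1 : ℝ) := by
      rw [real_inner_self_eq_norm_sq, hx]; ring
    have hip' : ⟪P x, x⟫ = lam / 2 := hip.trans hval
    have hcm : ⟪x, P x⟫ = lam / 2 := (real_inner_comm (P x) x).trans hip'
    linarith
  -- span equality
  have hd : (P - Q) x = (2 : ℝ) • P x - lam • x := by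
    rw [LinearMap.sub_apply, hQx]; module
  have hspan : Submodule.span ℝ {P x, x - P x} = Submodule.span ℝ {x, (P - Q) x} := by
    apply le_antisymm
    · rw [Submodule.span_le]
      rintro v (rfl | rfl)
      · exact Submodule.mem_span_pair.mpr ⟨lam / 2, 1 / 2, by rw [hd]; module⟩
      · exact Submodule.mem_span_pair.mpr
          ⟨1 - lam / 2, -(1 / 2), by rw [hd]; module⟩
    · rw [Submodule.span_le]
      rintro v (rfl | rfl)
      · exact Submodule.mem_span_pair.mpr ⟨1, 1, by module⟩
      · exact Submodule.mem_span_pair.mpr ⟨2 - lam, -lam, by rw [hd]; module⟩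
  exact ⟨eq1, hc, hpq0, eq4, hppos, hpeq, hqlt, hxp0, horth, hspan⟩
end

section
/- Let λ ∈ (0,1) ∪ (1,2) and let V_λ and V_{2−λ} denote the eigenspaces of P + Q for the eigenvalues λ and 2−λ respectively. If x_1, …, x_k is an orthonormal basis of V_λ, then (P−Q)x_1, …, (P−Q)x_k is an orthogonal system of non-zero vectors spanning V_{2−λ}; in particular dim V_λ = dim V_{2−λ}. -/
open scoped RealInnerProductSpace

/-- For orthogonal projectors `P`, `Q` on `ℝ^d` and `λ ∈ (0,1) ∪ (1,2)`, if
`x_1, …, x_k` is an orthonormal basis of the eigenspace `V_λ` of `P + Q`, then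
`(P-Q)x_1, …, (P-Q)x_k` is an orthogonal system of non-zero vectors spanning
`V_{2-λ}`; in particular `dim V_λ = dim V_{2-λ}`. -/
theorem proj_sum_eigenspace_pairing
    (d : ℕ) (P Q : EuclideanSpace ℝ (Fin d) →ₗ[ℝ] EuclideanSpace ℝ (Fin d))
    (hPsym : P.IsSymmetric) (hPidem : ∀ x, P (P x) = P x)
    (hQsym : Q.IsSymmetric) (hQidem : ∀ x, Q (Q x) = Q x)
    (lam : ℝ) (hlam : lam ∈ Set.Ioo (0 : ℝ) 1 ∪ Set.Ioo (1 : ℝ) 2)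
    (k : ℕ) (x : Fin k → EuclideanSpace ℝ (Fin d))
    (hx_on : Orthonormal ℝ x)
    (hx_mem : ∀ i, x i ∈ Module.End.eigenspace (P + Q) lam)
    (hx_span : Submodule.span ℝ (Set.range x) = Module.End.eigenspace (P + Q) lam) :
    (∀ i, (P - Q) (x i) ≠ 0) ∧
      (∀ i j, i ≠ j → ⟪(P - Q) (x i), (P - Q) (x j)⟫ = 0) ∧
      Submodule.span ℝ (Set.range fun i => (P - Q) (x i)) =
        Module.End.eigenspace (P + Q) (2 - lam) ∧
      Module.finrank ℝ (Module.End.eigenspace (P + Q) lam) =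
        Module.finrank ℝ (Module.End.eigenspace (P + Q) (2 - lam)) := by
  set A := P + Q with hA
  set B := P - Q with hB
  have hlam0 : 0 < lam := by rcases hlam with h | h <;> [exact h.1; linarith [h.1]]
  have hlam2 : lam < 2 := by rcases hlam with h | h <;> [linarith [h.2]; exact h.2]
  have hmu : lam * (2 - lam) ≠ 0 := mul_ne_zero hlam0.ne' (by linarith)
  have hBsym : B.IsSymmetric := hPsym.sub hQsym
  -- anticommutation: A (B v) + B (A v) = 2 • B v
  have hAB : ∀ v, A (B v) = (2:ℝ) • B v - B (A v) := by
    intro v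
    simp only [hA, hB, LinearMap.add_apply, LinearMap.sub_apply, map_add, map_sub,
      hPidem, hQidem]
    ext j; simp; ring
  -- B² = 2A − A²
  have hB2 : ∀ v, B (B v) = (2:ℝ) • A v - A (A v) := by
    intro v
    simp only [hA, hB, LinearMap.add_apply, LinearMap.sub_apply, map_add, map_sub,
      hPidem, hQidem]
    ext j; simp; ring
  -- on any eigenvector with eigenvalue μ: B maps to eigenvalue 2−μ, B² acts as μ(2−μ)
  have hmap : ∀ (μ : ℝ) (v : EuclideanSpace ℝ (Fin d)),
      v ∈ Module.End.eigenspace A μ → B v ∈ Module.End.eigenspace A (2 - μ) := by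
    intro μ v hv
    rw [Module.End.mem_eigenspace_iff] at hv ⊢
    rw [hAB v, hv, map_smul]; module
  have hsq : ∀ (μ : ℝ) (v : EuclideanSpace ℝ (Fin d)),
      v ∈ Module.End.eigenspace A μ → B (B v) = (μ * (2 - μ)) • v := by
    intro μ v hv
    rw [Module.End.mem_eigenspace_iff] at hv
    rw [hB2 v, hv, map_smul, hv]; module
  have h1 : ∀ i, B (x i) ≠ 0 := by
    intro i h0
    have := hsq lam (x i) (hx_mem i)
    rw [h0, map_zero] at this
    exact hx_on.ne_zero i (by simpa [smul_eq_zero, hmu] using this.symm)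
  have h2 : ∀ i j, i ≠ j → ⟪B (x i), B (x j)⟫ = 0 := by
    intro i j hij
    have : ⟪B (x i), B (x j)⟫ = ⟪x i, B (B (x j))⟫ := hBsym (x i) (B (x j))
    rw [this, hsq lam (x j) (hx_mem j), real_inner_smul_right,
      hx_on.2 hij, mul_zero]
  have hli : LinearIndependent ℝ fun i => B (x i) :=
    linearIndependent_of_ne_zero_of_inner_eq_zero h1 h2
  have h3 : Submodule.span ℝ (Set.range fun i => B (x i)) =
      Module.End.eigenspace A (2 - lam) := by
    apply le_antisymm
    · rw [Submodule.span_le]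
      rintro _ ⟨i, rfl⟩
      exact hmap lam (x i) (hx_mem i)
    · intro y hy
      have hBy : B y ∈ Submodule.span ℝ (Set.range x) := by
        rw [hx_span]
        have := hmap (2 - lam) y hy
        simpa using this
      have hBBy : B (B y) ∈ Submodule.span ℝ (Set.range fun i => B (x i)) := by
        have : B (B y) ∈ Submodule.map B (Submodule.span ℝ (Set.range x)) :=
          ⟨B y, hBy, rfl⟩
        rwa [Submodule.map_span, ← Set.range_comp] at this
      have hyy : B (B y) = ((2 - lam) * lam) • y := by
        have := hsq (2 - lam) y hy
        rwa [show (2:ℝ) - (2 - lam) = lam by ring] at this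
      have : y = (((2 - lam) * lam)⁻¹) • B (B y) := by
        rw [hyy, smul_smul, inv_mul_cancel₀ (mul_ne_zero (by linarith) hlam0.ne'), one_smul]
      rw [this]
      exact Submodule.smul_mem _ _ hBBy
  refine ⟨h1, h2, h3, ?_⟩
  rw [← hx_span, ← h3, finrank_span_eq_card hx_on.linearIndependent,
    finrank_span_eq_card hli]
end

section
/- The projectors P and Q have the same rank if and only if dim(Im(P) ∩ ker(Q)) = dim(ker(P) ∩ Im(Q)). -/
open scoped RealInnerProductSpace

section Aux

variable {d : ℕ}

local notation "E" => EuclideanSpace ℝ (Fin d)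

lemma aux_rank_nullity (P Q : E →ₗ[ℝ] E) :
    Module.finrank ℝ (LinearMap.range P) =
      Module.finrank ℝ (LinearMap.range (Q ∘ₗ P)) +
        Module.finrank ℝ ↥(LinearMap.range P ⊓ LinearMap.ker Q) := by
  classical
  set p := LinearMap.range P
  have h := LinearMap.finrank_range_add_finrank_ker (Q ∘ₗ p.subtype)
  have hrange : LinearMap.range (Q ∘ₗ p.subtype) = LinearMap.range (Q ∘ₗ P) := by
    rw [LinearMap.range_comp, LinearMap.range_comp, Submodule.range_subtype]
  have hker : Module.finrank ℝ (LinearMap.ker (Q ∘ₗ p.subtype)) =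
      Module.finrank ℝ ↥(p ⊓ LinearMap.ker Q) := by
    rw [LinearMap.ker_comp]
    rw [← Submodule.map_comap_subtype p (LinearMap.ker Q)]
    exact (Submodule.equivMapOfInjective p.subtype p.injective_subtype _).finrank_eq
  rw [hrange, hker] at h
  have : Module.finrank ℝ ↥p = Module.finrank ℝ p := rfl
  omega

lemma aux_rank_comp_comm (P Q : E →ₗ[ℝ] E)
    (hPsym : P.IsSymmetric) (hQsym : Q.IsSymmetric) :
    Module.finrank ℝ (LinearMap.range (Q ∘ₗ P)) =
      Module.finrank ℝ (LinearMap.range (P ∘ₗ Q)) := by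
  have hker : LinearMap.ker (P ∘ₗ Q) = (LinearMap.range (Q ∘ₗ P))ᗮ := by
    ext x
    simp only [LinearMap.mem_ker, LinearMap.coe_comp, Function.comp_apply,
      Submodule.mem_orthogonal]
    constructor
    · rintro h u ⟨y, rfl⟩
      simp only [LinearMap.coe_comp, Function.comp_apply]
      calc ⟪Q (P y), x⟫ = ⟪P y, Q x⟫ := hQsym _ _
        _ = ⟪y, P (Q x)⟫ := hPsym _ _
        _ = 0 := by rw [h, inner_zero_right]
    · intro h
      have := h (Q (P (P (Q x)))) ⟨P (Q x), rfl⟩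
      have h2 : ⟪P (Q x), P (Q x)⟫ = 0 := by
        calc ⟪P (Q x), P (Q x)⟫ = ⟪Q (P (P (Q x))), x⟫ := by
              rw [hQsym, hPsym, real_inner_comm]
          _ = 0 := this
      exact inner_self_eq_zero.mp h2
  have h1 := LinearMap.finrank_range_add_finrank_ker (P ∘ₗ Q)
  have h2 := Submodule.finrank_add_finrank_orthogonal (K := LinearMap.range (Q ∘ₗ P))
  rw [hker] at h1
  omega

end Aux

/-- Orthogonal projectors `P`, `Q` on `ℝ^d` have the same rank if and only if
`dim(Im P ∩ ker Q) = dim(ker P ∩ Im Q)`. -/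
theorem proj_same_rank_iff
    (d : ℕ) (P Q : EuclideanSpace ℝ (Fin d) →ₗ[ℝ] EuclideanSpace ℝ (Fin d))
    (hPsym : P.IsSymmetric) (hPidem : ∀ x, P (P x) = P x)
    (hQsym : Q.IsSymmetric) (hQidem : ∀ x, Q (Q x) = Q x) :
    Module.finrank ℝ (LinearMap.range P) = Module.finrank ℝ (LinearMap.range Q) ↔
      Module.finrank ℝ ↥(LinearMap.range P ⊓ LinearMap.ker Q) =
        Module.finrank ℝ ↥(LinearMap.ker P ⊓ LinearMap.range Q) := by
  have h1 := aux_rank_nullity P Q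
  have h2 := aux_rank_nullity Q P
  have h3 := aux_rank_comp_comm P Q hPsym hQsym
  have h4 : LinearMap.ker P ⊓ LinearMap.range Q = LinearMap.range Q ⊓ LinearMap.ker P :=
    inf_comm _ _
  rw [h4]
  omega
end

section
/- Assume rank(P) = rank(Q). Then the operator norm of P − Q is attained on the image of Q: ‖P − Q‖ = sup { ‖(P−Q)θ‖ : θ ∈ Im(Q), ‖θ‖ = 1 }. -/
/-! `A = P - Q` is self-adjoint, so `±‖A‖` lies in its spectrum and `A²` has an eigenvector `v`
for the eigenvalue `‖A‖²`; every such eigenvector `u` satisfies `‖A u‖ = ‖A‖ ‖u‖`. Since `A²`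
commutes with `P` and `Q`, either `Q v` or `Q P v` is such an eigenvector lying in `range Q`, or
both vanish. In the latter case `A² v = P v`, so `‖A‖ = 1` and `v ∈ range P ⊓ (range Q)ᗮ`; as
`P` and `Q` have the same rank this forces a nonzero `w ∈ range Q ⊓ (range P)ᗮ`, and `A w = -w`. -/

open scoped RealInnerProductSpace
open Module

section

variable {𝕜 E : Type*} [RCLike 𝕜] [NormedAddCommGroup E] [InnerProductSpace 𝕜 E]

theorem IsIdempotentElem.commute_sub_sq {R : Type*} [Ring R] {p q : R}
    (hp : IsIdempotentElem p) (hq : IsIdempotentElem q) : Commute ((p - q) ^ 2) q := by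
  simp only [Commute, SemiconjBy, sq, sub_mul, mul_sub, hp.eq, hq.eq, mul_assoc]
  simp only [← mul_assoc, hq.eq]
  abel

theorem Submodule.inf_orthogonal_ne_bot_of_finrank_eq [FiniteDimensional 𝕜 E]
    {U V : Submodule 𝕜 E} (h : finrank 𝕜 U = finrank 𝕜 V) (hUV : U ⊓ Vᗮ ≠ ⊥) :
    V ⊓ Uᗮ ≠ ⊥ := by
  contrapose! hUV
  have hsup : Uᗮ ⊔ V = ⊤ := by
    apply Submodule.eq_top_of_finrank_eq
    have := Submodule.finrank_sup_add_finrank_inf_eq V Uᗮ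
    rw [hUV, finrank_bot, add_zero] at this
    rw [sup_comm, this, ← h, Submodule.finrank_add_finrank_orthogonal]
  rw [← Submodule.orthogonal_orthogonal U, Submodule.inf_orthogonal, hsup,
    Submodule.top_orthogonal_eq_bot]

theorem LinearMap.IsSymmetric.norm_apply_eq_of_apply_apply_eq {A : E →L[𝕜] E}
    (hA : (A : E →ₗ[𝕜] E).IsSymmetric) {c : ℝ} (hc : 0 ≤ c) {u : E}
    (hu : A (A u) = ((c ^ 2 : ℝ) : 𝕜) • u) : ‖A u‖ = c * ‖u‖ := by
  have hsq : ‖A u‖ ^ 2 = (c * ‖u‖) ^ 2 := by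
    rw [← inner_self_eq_norm_sq (𝕜 := 𝕜), ← ContinuousLinearMap.coe_coe, hA,
      ContinuousLinearMap.coe_coe, hu, inner_smul_right, RCLike.re_ofReal_mul,
      inner_self_eq_norm_sq]
    ring
  exact (sq_eq_sq₀ (norm_nonneg _) (by positivity)).1 hsq

theorem LinearMap.IsSymmetric.exists_apply_apply_eq_norm_sq_smul [FiniteDimensional 𝕜 E]
    [Nontrivial E] {A : E →L[𝕜] E} (hA : (A : E →ₗ[𝕜] E).IsSymmetric) :
    ∃ v ≠ 0, A (A v) = ((‖A‖ ^ 2 : ℝ) : 𝕜) • v := by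
  have := FiniteDimensional.complete 𝕜 E
  obtain ⟨μ, hμA, hμ⟩ : ∃ μ : 𝕜, μ ∈ spectrum 𝕜 A ∧ μ ^ 2 = ((‖A‖ ^ 2 : ℝ) : 𝕜) := by
    by_contra! h
    obtain ⟨ε, hε, hle⟩ := A.abs_rayleighQuotient_le_of_norm_mem_resolventSet
      (spectrum.notMem_iff.1 fun hmem => h _ hmem (by simp))
      (spectrum.notMem_iff.1 fun hmem => h _ hmem (by simp))
    linarith [ciSup_le hle, A.norm_eq_iSup_rayleighQuotient hA]
  rw [ContinuousLinearMap.spectrum_eq] at hμA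
  obtain ⟨v, hv⟩ := (Module.End.hasEigenvalue_iff_mem_spectrum.2 hμA).exists_hasEigenvector
  refine ⟨v, hv.2, ?_⟩
  have hAv : A v = μ • v := hv.apply_eq_smul
  rw [hAv, map_smul, hAv, smul_smul, ← sq, hμ]

theorem exists_mem_range_of_sub_apply_sub_apply_eq_smul [FiniteDimensional 𝕜 E] {P Q : E →L[𝕜] E}
    (hPsym : (P : E →ₗ[𝕜] E).IsSymmetric) (hPidem : IsIdempotentElem P)
    (hQsym : (Q : E →ₗ[𝕜] E).IsSymmetric) (hQidem : IsIdempotentElem Q)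
    (hrank : finrank 𝕜 (LinearMap.range (P : E →ₗ[𝕜] E)) =
      finrank 𝕜 (LinearMap.range (Q : E →ₗ[𝕜] E)))
    {c : 𝕜} (hc : c ≠ 0) {v : E} (hv : v ≠ 0) (hcv : (P - Q) ((P - Q) v) = c • v) :
    ∃ u ∈ LinearMap.range (Q : E →ₗ[𝕜] E), u ≠ 0 ∧ (P - Q) ((P - Q) u) = c • u := by
  have hcommQ (x : E) : (P - Q) ((P - Q) (Q x)) = Q ((P - Q) ((P - Q) x)) :=
    congr($((hPidem.commute_sub_sq hQidem).eq) x)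
  have hcommP (x : E) : (P - Q) ((P - Q) (P x)) = P ((P - Q) ((P - Q) x)) := by
    have h := (hQidem.commute_sub_sq hPidem).eq
    rw [← neg_sub, neg_sq] at h
    exact congr($h x)
  rcases ne_or_eq (Q v) 0 with hQv | hQv
  · exact ⟨Q v, ⟨v, rfl⟩, hQv, by rw [hcommQ, hcv, map_smul]⟩
  rcases ne_or_eq (Q (P v)) 0 with hQPv | hQPv
  · exact ⟨Q (P v), ⟨P v, rfl⟩, hQPv, by rw [hcommQ, hcommP, hcv, map_smul, map_smul]⟩
  have hPPv : P (P v) = P v := congr($hPidem.eq v)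
  have hPv : P v = c • v := by simpa [hQv, hQPv, hPPv] using hcv
  have hc1 : c = 1 := by
    rw [hPv, map_smul, hPv, smul_smul] at hPPv
    exact mul_left_cancel₀ hc ((smul_left_injective 𝕜 hv hPPv).trans (mul_one c).symm)
  have hv_mem : v ∈ LinearMap.range (P : E →ₗ[𝕜] E) ⊓ (LinearMap.range (Q : E →ₗ[𝕜] E))ᗮ := by
    refine ⟨⟨v, by simp [hPv, hc1]⟩, ?_⟩
    rw [hQsym.orthogonal_range]
    exact hQv
  obtain ⟨w, ⟨hwQ, hwP⟩, hw0⟩ := (Submodule.ne_bot_iff _).1 <|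
    Submodule.inf_orthogonal_ne_bot_of_finrank_eq hrank ((Submodule.ne_bot_iff _).2 ⟨v, hv_mem, hv⟩)
  rw [hPsym.orthogonal_range] at hwP
  have hPw : P w = 0 := hwP
  have hQw : Q w = w := by
    obtain ⟨z, rfl⟩ := hwQ
    exact congr($hQidem.eq z)
  refine ⟨w, hwQ, hw0, ?_⟩
  simp [hPw, hQw, hc1]

theorem ContinuousLinearMap.opNorm_eq_sSup_norm_apply_of_attained {G F : Type*}
    [NormedAddCommGroup G] [NormedSpace 𝕜 G] [NormedAddCommGroup F] [NormedSpace 𝕜 F]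
    (A : G →L[𝕜] F) {S : Submodule 𝕜 G} {u : G} (huS : u ∈ S) (hu : u ≠ 0)
    (hAu : ‖A u‖ = ‖A‖ * ‖u‖) :
    ‖A‖ = sSup ((fun θ => ‖A θ‖) '' {θ | θ ∈ S ∧ ‖θ‖ = 1}) := by
  symm
  refine IsGreatest.csSup_eq ⟨⟨(‖u‖⁻¹ : 𝕜) • u, ⟨S.smul_mem _ huS, ?_⟩, ?_⟩, ?_⟩
  · simp [norm_smul, hu]
  · simp only [map_smul, norm_smul, norm_inv, RCLike.norm_ofReal, abs_norm, hAu]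
    rw [mul_left_comm, inv_mul_cancel₀ (norm_ne_zero_iff.2 hu), mul_one]
  · rintro _ ⟨θ, ⟨-, hθ⟩, rfl⟩
    simpa [hθ] using A.le_opNorm θ

end

/-- For orthogonal projectors `P`, `Q` on `ℝ^d` of the same rank (with `Im Q`
nontrivial, so the supremum is over a nonempty set), the operator norm of `P - Q` is
attained on the image of `Q`:
`‖P - Q‖ = sup { ‖(P-Q)θ‖ : θ ∈ Im Q, ‖θ‖ = 1 }`. -/
theorem proj_diff_norm_attained_on_range
    (d : ℕ) (P Q : EuclideanSpace ℝ (Fin d) →L[ℝ] EuclideanSpace ℝ (Fin d))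
    (hPsym : ∀ x y : EuclideanSpace ℝ (Fin d), ⟪P x, y⟫ = ⟪x, P y⟫)
    (hPidem : ∀ x, P (P x) = P x)
    (hQsym : ∀ x y : EuclideanSpace ℝ (Fin d), ⟪Q x, y⟫ = ⟪x, Q y⟫)
    (hQidem : ∀ x, Q (Q x) = Q x)
    (hrank : Module.finrank ℝ (LinearMap.range (P : EuclideanSpace ℝ (Fin d) →ₗ[ℝ] EuclideanSpace ℝ (Fin d))) = Module.finrank ℝ (LinearMap.range (Q : EuclideanSpace ℝ (Fin d) →ₗ[ℝ] EuclideanSpace ℝ (Fin d))))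
    (hQne : LinearMap.range (Q : EuclideanSpace ℝ (Fin d) →ₗ[ℝ] EuclideanSpace ℝ (Fin d)) ≠ ⊥) :
    ‖P - Q‖ =
      sSup ((fun θ => ‖(P - Q) θ‖) ''
        {θ : EuclideanSpace ℝ (Fin d) | θ ∈ LinearMap.range (Q : EuclideanSpace ℝ (Fin d) →ₗ[ℝ] EuclideanSpace ℝ (Fin d)) ∧ ‖θ‖ = 1}) := by
  obtain ⟨y, hyQ, hy0⟩ := (Submodule.ne_bot_iff _).1 hQne
  have : Nontrivial (EuclideanSpace ℝ (Fin d)) := ⟨⟨y, 0, hy0⟩⟩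
  have hAsym : (↑(P - Q) : EuclideanSpace ℝ (Fin d) →ₗ[ℝ] _).IsSymmetric := by
    rw [ContinuousLinearMap.toLinearMap_sub]
    exact LinearMap.IsSymmetric.sub hPsym hQsym
  rcases eq_or_ne ‖P - Q‖ 0 with h0 | h0
  · exact (P - Q).opNorm_eq_sSup_norm_apply_of_attained hyQ hy0 (by simp [norm_eq_zero.1 h0])
  obtain ⟨v, hv0, hv⟩ := hAsym.exists_apply_apply_eq_norm_sq_smul
  obtain ⟨u, huQ, hu0, hu⟩ := exists_mem_range_of_sub_apply_sub_apply_eq_smul hPsym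
    (ContinuousLinearMap.ext hPidem) hQsym (ContinuousLinearMap.ext hQidem) hrank
    (by simpa using h0) hv0 hv
  exact (P - Q).opNorm_eq_sSup_norm_apply_of_attained huQ hu0
    (hAsym.norm_apply_eq_of_apply_apply_eq (norm_nonneg _) hu)
end
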